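/- arXiv:2205.14466 — 4 statements merged into one kernel-verified Lean document; each statement's English description precedes it below -/
import Mathlib

section
/- For every integer n ≥ 4 there exists a constant c(n), depending only on n, such that every connected {K_n, K_{1,n}, F^(1)_n, F^(2)_n, F^(4)_n, F^(5)_n}-free finite simple graph G satisfies inpp(G) ≤ c(n). -/
open SimpleGraph

/-- `G` contains an induced subgraph isomorphic to `H`. -/
def HasInducedCopy {V W : Type*} (G : SimpleGraph V) (H : SimpleGraph W) : Prop :=
  ∃ f : W ↪ V, ∀ a b : W, G.Adj (f a) (f b) ↔ H.Adj a b

/-- The star `K_{1,m}` (one center plus `m` leaves). -/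
def starGraph (m : ℕ) : SimpleGraph (Unit ⊕ Fin m) := completeBipartiteGraph Unit (Fin m)

/-- `S` induces in `G` a subgraph isomorphic to a path `P_m` on `m ≥ 1` vertices. -/
def IsInducedPathSet {V : Type*} (G : SimpleGraph V) (S : Set V) : Prop :=
  ∃ m : ℕ, 1 ≤ m ∧ Nonempty ((G.induce S) ≃g pathGraph m)

/-- `S` induces in `G` a subgraph isomorphic to a star `K_{1,m}` with `m ≥ 1`. -/
def IsInducedStarSet {V : Type*} (G : SimpleGraph V) (S : Set V) : Prop :=
  ∃ m : ℕ, 1 ≤ m ∧ Nonempty ((G.induce S) ≃g _root_.starGraph m)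

/-- `S` consists of a single vertex (i.e. induces `K_1`). -/
def IsSingletonSet {V : Type*} (S : Set V) : Prop := ∃ v, S = {v}

/-- `S` is the vertex set of an isometric (shortest) path of `G`. -/
def IsIsometricPathSet {V : Type*} (G : SimpleGraph V) (S : Set V) : Prop :=
  ∃ (u v : V) (p : G.Walk u v), p.IsPath ∧ p.length = G.dist u v ∧
    S = {x | x ∈ p.support}

/-- `P` is a family of sets, all satisfying `pred`, whose union is all of `V`. -/
def IsCoverBy {V : Type*} (P : Finset (Set V)) (pred : Set V → Prop) : Prop :=
  (∀ S ∈ P, pred S) ∧ ∀ v : V, ∃ S ∈ P, v ∈ S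

/-- `P` is a cover by sets satisfying `pred`, whose members are pairwise disjoint. -/
def IsPartitionBy {V : Type*} (P : Finset (Set V)) (pred : Set V → Prop) : Prop :=
  IsCoverBy P pred ∧ ∀ S ∈ P, ∀ T ∈ P, S ≠ T → ∀ v, v ∈ S → v ∉ T

/-- Minimum cardinality of a cover by sets satisfying `pred`. -/
noncomputable def coverNumber {V : Type*} (pred : Set V → Prop) : ℕ :=
  sInf {k | ∃ P : Finset (Set V), P.card = k ∧ IsCoverBy P pred}

/-- Minimum cardinality of a partition into sets satisfying `pred`. -/
noncomputable def partitionNumber {V : Type*} (pred : Set V → Prop) : ℕ :=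
  sInf {k | ∃ P : Finset (Set V), P.card = k ∧ IsPartitionBy P pred}

/-- The induced SP-cover number. -/
noncomputable def inspc {V : Type*} (G : SimpleGraph V) : ℕ :=
  coverNumber (fun S => IsInducedStarSet G S ∨ IsInducedPathSet G S)

/-- The induced SP-partition number. -/
noncomputable def inspp {V : Type*} (G : SimpleGraph V) : ℕ :=
  partitionNumber (fun S => IsInducedStarSet G S ∨ IsInducedPathSet G S)

/-- The induced star cover number. -/
noncomputable def insc {V : Type*} (G : SimpleGraph V) : ℕ :=
  coverNumber (fun S => IsInducedStarSet G S ∨ IsSingletonSet S)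

/-- The induced star partition number. -/
noncomputable def insp {V : Type*} (G : SimpleGraph V) : ℕ :=
  partitionNumber (fun S => IsInducedStarSet G S ∨ IsSingletonSet S)

/-- The induced path cover number. -/
noncomputable def inpc {V : Type*} (G : SimpleGraph V) : ℕ :=
  coverNumber (fun S => IsInducedPathSet G S)

/-- The induced path partition number. -/
noncomputable def inpp {V : Type*} (G : SimpleGraph V) : ℕ :=
  partitionNumber (fun S => IsInducedPathSet G S)

/-- The isometric path cover number. -/
noncomputable def ispc {V : Type*} (G : SimpleGraph V) : ℕ :=
  coverNumber (fun S => IsIsometricPathSet G S)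

/-- The isometric path partition number. -/
noncomputable def ispp {V : Type*} (G : SimpleGraph V) : ℕ :=
  partitionNumber (fun S => IsIsometricPathSet G S)

/-- `S*_n` : center `x = inl ()`, middle vertices `y i = inr (inl i)`,
leaves `z i = inr (inr i)`; edges `x yᵢ` and `yᵢ zᵢ`. -/
def SStar (n : ℕ) : SimpleGraph (Unit ⊕ Fin n ⊕ Fin n) :=
  SimpleGraph.fromRel (fun a b =>
    (∃ i : Fin n, a = Sum.inl () ∧ b = Sum.inr (Sum.inl i)) ∨
    (∃ i : Fin n, a = Sum.inr (Sum.inl i) ∧ b = Sum.inr (Sum.inr i)))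

/-- `S̃_n` : `S*_n` together with the edges `x zᵢ`. -/
def STilde (n : ℕ) : SimpleGraph (Unit ⊕ Fin n ⊕ Fin n) :=
  SimpleGraph.fromRel (fun a b =>
    (∃ i : Fin n, a = Sum.inl () ∧ b = Sum.inr (Sum.inl i)) ∨
    (∃ i : Fin n, a = Sum.inr (Sum.inl i) ∧ b = Sum.inr (Sum.inr i)) ∨
    (∃ i : Fin n, a = Sum.inl () ∧ b = Sum.inr (Sum.inr i)))

/-- `F⁽¹⁾_n` : vertices `x₁ = inl 0`, `x₂ = inl 1`, `yᵢ = inr (inl i)`, `zᵢ = inr (inr i)`;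
edges `x₁x₂`, `x₁y₁`, `x₁z₁`, and two paths `y₁⋯yₙ`, `z₁⋯zₙ`. -/
def F1 (n : ℕ) : SimpleGraph (Fin 2 ⊕ Fin n ⊕ Fin n) :=
  SimpleGraph.fromRel (fun a b =>
    (a = Sum.inl 0 ∧ b = Sum.inl 1) ∨
    (∃ j : Fin n, (j : ℕ) = 0 ∧ a = Sum.inl 0 ∧ b = Sum.inr (Sum.inl j)) ∨
    (∃ j : Fin n, (j : ℕ) = 0 ∧ a = Sum.inl 0 ∧ b = Sum.inr (Sum.inr j)) ∨
    (∃ i j : Fin n, (i : ℕ) + 1 = (j : ℕ) ∧ a = Sum.inr (Sum.inl i) ∧ b = Sum.inr (Sum.inl j)) ∨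
    (∃ i j : Fin n, (i : ℕ) + 1 = (j : ℕ) ∧ a = Sum.inr (Sum.inr i) ∧ b = Sum.inr (Sum.inr j)))

/-- `F⁽²⁾_n` : vertex `x₁ = inl ()`, `yᵢ = inr (inl i)`, `zᵢ = inr (inr i)`;
edges `x₁y₁`, `x₁z₁`, `y₁z₁`, and two paths `y₁⋯yₙ`, `z₁⋯zₙ`. -/
def F2 (n : ℕ) : SimpleGraph (Unit ⊕ Fin n ⊕ Fin n) :=
  SimpleGraph.fromRel (fun a b =>
    (∃ j : Fin n, (j : ℕ) = 0 ∧ a = Sum.inl () ∧ b = Sum.inr (Sum.inl j)) ∨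
    (∃ j : Fin n, (j : ℕ) = 0 ∧ a = Sum.inl () ∧ b = Sum.inr (Sum.inr j)) ∨
    (∃ i j : Fin n, (i : ℕ) = 0 ∧ (j : ℕ) = 0 ∧ a = Sum.inr (Sum.inl i) ∧ b = Sum.inr (Sum.inr j)) ∨
    (∃ i j : Fin n, (i : ℕ) + 1 = (j : ℕ) ∧ a = Sum.inr (Sum.inl i) ∧ b = Sum.inr (Sum.inl j)) ∨
    (∃ i j : Fin n, (i : ℕ) + 1 = (j : ℕ) ∧ a = Sum.inr (Sum.inr i) ∧ b = Sum.inr (Sum.inr j)))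

/-- `F⁽³⁾_n` : vertices `xᵢ = inl i`, `yᵢ = inr (inl i)`, `zᵢ = inr (inr i)`;
edges `xᵢy₁`, `xᵢz₁` for all `i`, and two paths `y₁⋯yₙ`, `z₁⋯zₙ`. -/
def F3 (n : ℕ) : SimpleGraph (Fin n ⊕ Fin n ⊕ Fin n) :=
  SimpleGraph.fromRel (fun a b =>
    (∃ (i j : Fin n), (j : ℕ) = 0 ∧ a = Sum.inl i ∧ b = Sum.inr (Sum.inl j)) ∨
    (∃ (i j : Fin n), (j : ℕ) = 0 ∧ a = Sum.inl i ∧ b = Sum.inr (Sum.inr j)) ∨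
    (∃ i j : Fin n, (i : ℕ) + 1 = (j : ℕ) ∧ a = Sum.inr (Sum.inl i) ∧ b = Sum.inr (Sum.inl j)) ∨
    (∃ i j : Fin n, (i : ℕ) + 1 = (j : ℕ) ∧ a = Sum.inr (Sum.inr i) ∧ b = Sum.inr (Sum.inr j)))

/-- `F⁽⁴⁾_n` : `F⁽³⁾_n` with only `x₁, x₂` kept (no edge `x₁x₂`). -/
def F4 (n : ℕ) : SimpleGraph (Fin 2 ⊕ Fin n ⊕ Fin n) :=
  SimpleGraph.fromRel (fun a b =>
    (∃ (i : Fin 2) (j : Fin n), (j : ℕ) = 0 ∧ a = Sum.inl i ∧ b = Sum.inr (Sum.inl j)) ∨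
    (∃ (i : Fin 2) (j : Fin n), (j : ℕ) = 0 ∧ a = Sum.inl i ∧ b = Sum.inr (Sum.inr j)) ∨
    (∃ i j : Fin n, (i : ℕ) + 1 = (j : ℕ) ∧ a = Sum.inr (Sum.inl i) ∧ b = Sum.inr (Sum.inl j)) ∨
    (∃ i j : Fin n, (i : ℕ) + 1 = (j : ℕ) ∧ a = Sum.inr (Sum.inr i) ∧ b = Sum.inr (Sum.inr j)))

/-- `F⁽⁵⁾_n` : `F⁽⁴⁾_n` plus the edge `x₁x₂`. -/
def F5 (n : ℕ) : SimpleGraph (Fin 2 ⊕ Fin n ⊕ Fin n) :=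
  SimpleGraph.fromRel (fun a b =>
    (a = Sum.inl 0 ∧ b = Sum.inl 1) ∨
    (∃ (i : Fin 2) (j : Fin n), (j : ℕ) = 0 ∧ a = Sum.inl i ∧ b = Sum.inr (Sum.inl j)) ∨
    (∃ (i : Fin 2) (j : Fin n), (j : ℕ) = 0 ∧ a = Sum.inl i ∧ b = Sum.inr (Sum.inr j)) ∨
    (∃ i j : Fin n, (i : ℕ) + 1 = (j : ℕ) ∧ a = Sum.inr (Sum.inl i) ∧ b = Sum.inr (Sum.inl j)) ∨
    (∃ i j : Fin n, (i : ℕ) + 1 = (j : ℕ) ∧ a = Sum.inr (Sum.inr i) ∧ b = Sum.inr (Sum.inr j)))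

/-- The Ramsey number `R(a,b)` : least `R` such that every simple graph on at least `R`
vertices contains a clique of size `a` or an independent set of size `b`. -/
noncomputable def ramseyNumber (a b : ℕ) : ℕ :=
  sInf {R : ℕ | ∀ (m : ℕ) (G : SimpleGraph (Fin m)), R ≤ m →
    (∃ s : Finset (Fin m), s.card = a ∧ ∀ u ∈ s, ∀ v ∈ s, u ≠ v → G.Adj u v) ∨
    (∃ s : Finset (Fin m), s.card = b ∧ ∀ u ∈ s, ∀ v ∈ s, u ≠ v → ¬ G.Adj u v)}

/-- `ξ_{n,i} = ((R(n-1,n)-1)^i - 1)/(R(n-1,n)-2)`. -/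
noncomputable def xi (n i : ℕ) : ℕ :=
  ((ramseyNumber (n - 1) n - 1) ^ i - 1) / (ramseyNumber (n - 1) n - 2)

/-!
Since `G` contains neither `K_n` nor `K_{1,n}`, no neighbourhood contains `K_{n-1}` or `n`
independent vertices, so Ramsey's theorem bounds the degrees of `G` by `C(2n-1, n-1)`.

Fix a longest induced path `p 0, …, p (m-1)`. Each of `F⁽¹⁾_n, F⁽²⁾_n, F⁽⁴⁾_n, F⁽⁵⁾_n` is an
induced path with one extra vertex attached near its middle. A vertex `u` off the path has at
most `2n - 2` neighbours on it (neighbours of equal parity are independent), so if one of them is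
far from both ends there are gaps of `n + 2` non-neighbours on either side, and the outermost
neighbours `p a`, `p b` between the gaps always yield one of the four forbidden graphs.

Now walk from a vertex `v` off the path along a shortest path to it, arriving at `u`. If `u` only
sees the path near one end, maximality of the path makes this walk short, so `v` is close to that
end; if `u` sees it near both ends, `u` is the centre of an `F⁽¹⁾_n`, unless `u = v`. So all
vertices off the path lie in two balls of bounded radius, hence are boundedly many, and the path
together with singletons is an induced path partition.
-/

theorem Finset.exists_gap_of_card_lt (S : Finset ℕ) {N : ℕ} (hS : S.card < N) (lo w : ℕ) :
    ∃ A, lo ≤ A ∧ A + w ≤ lo + N * w ∧ ∀ k ∈ S, k < A ∨ A + w ≤ k := by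
  rcases Nat.eq_zero_or_pos w with rfl | hw
  · exact ⟨lo, le_rfl, by simp, fun k _ => by omega⟩
  obtain ⟨t, ht, htS⟩ := Finset.exists_mem_notMem_of_card_lt_card
    (s := S.image fun k => (k - lo) / w) (t := Finset.range N)
    (by simpa using Finset.card_image_le.trans_lt hS)
  rw [Finset.mem_range] at ht
  refine ⟨lo + t * w, le_self_add, ?_, fun k hk => ?_⟩
  · have := Nat.mul_le_mul_right w ht
    rw [Nat.succ_mul] at this
    omega
  · by_contra! h
    refine htS (Finset.mem_image.2 ⟨k, hk, Nat.div_eq_of_lt_le (by omega) ?_⟩)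
    rw [Nat.succ_mul]; omega

namespace SimpleGraph

variable {V : Type*} {G : SimpleGraph V}

theorem hasInducedCopy_iff {W : Type*} {H : SimpleGraph W} :
    HasInducedCopy G H ↔ Nonempty (H ↪g G) :=
  ⟨fun ⟨f, hf⟩ => ⟨⟨f, hf _ _⟩⟩, fun ⟨f⟩ => ⟨f.toEmbedding, fun _ _ => f.map_rel_iff⟩⟩

theorem exists_isNClique_or_isNClique_compl (G : SimpleGraph V) (s t : ℕ) (A : Finset V)
    (hA : (s + t).choose s ≤ A.card) :
    (∃ B ⊆ A, G.IsNClique s B) ∨ ∃ B ⊆ A, Gᶜ.IsNClique t B := by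
  classical
  induction hst : s + t generalizing G s t A with
  | zero => exact .inl ⟨∅, by simp, by simp; omega⟩
  | succ N ih =>
    obtain _ | s := s
    · exact .inl ⟨∅, by simp, by simp⟩
    obtain _ | t := t
    · exact .inr ⟨∅, by simp, by simp⟩
    obtain ⟨v, hv⟩ : A.Nonempty := by
      rw [← Finset.card_pos]; exact lt_of_lt_of_le (Nat.choose_pos (by omega)) hA
    set Nb := (A.erase v).filter (G.Adj v)
    set Nc := (A.erase v).filter (Gᶜ.Adj v)
    have hsplit : Nb.card + Nc.card = A.card - 1 := by
      have : Nc = (A.erase v).filter (fun w => ¬ G.Adj v w) := by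
        ext w
        simp only [Nc, Finset.mem_filter, Finset.mem_erase, compl_adj]
        exact ⟨fun h => ⟨h.1, h.2.2⟩, fun h => ⟨h.1, h.1.1.symm, h.2⟩⟩
      rw [this, Finset.card_filter_add_card_filter_not, Finset.card_erase_of_mem hv]
    have hchoose : (s + 1 + (t + 1)).choose (s + 1) =
        (s + (t + 1)).choose s + (t + (s + 1)).choose t := by
      rw [show s + 1 + (t + 1) = s + (t + 1) + 1 by omega, Nat.choose_succ_succ,
        show s + (t + 1) = s + 1 + t by omega, Nat.choose_symm_add, add_comm (s + 1) t]
    have hNb : Nb ⊆ A := fun w hw => Finset.mem_of_mem_erase (Finset.mem_filter.1 hw).1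
    have hNc : Nc ⊆ A := fun w hw => Finset.mem_of_mem_erase (Finset.mem_filter.1 hw).1
    by_cases hb : (s + (t + 1)).choose s ≤ Nb.card
    · obtain ⟨B, hB, hcl⟩ | ⟨B, hB, hcl⟩ := ih G s (t + 1) Nb hb (by omega)
      · exact .inl ⟨insert v B, Finset.insert_subset hv (hB.trans hNb),
          hcl.insert fun w hw => (Finset.mem_filter.1 (hB hw)).2⟩
      · exact .inr ⟨B, hB.trans hNb, hcl⟩
    · obtain ⟨B, hB, hcl⟩ | ⟨B, hB, hcl⟩ := ih Gᶜ t (s + 1) Nc (by omega) (by omega)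
      · exact .inr ⟨insert v B, Finset.insert_subset hv (hB.trans hNc),
          hcl.insert fun w hw => (Finset.mem_filter.1 (hB hw)).2⟩
      · exact .inl ⟨B, hB.trans hNc, by rwa [compl_compl] at hcl⟩

theorem hasInducedCopy_starGraph {m : ℕ} {c : V} {B : Finset V} (hB : G.IsNIndepSet m B)
    (hc : ∀ b ∈ B, G.Adj c b) : HasInducedCopy G (_root_.starGraph m) := by
  let e := (B.equivFinOfCardEq hB.card_eq).symm
  have hcB : ∀ i, c ≠ e i := fun i h => G.loopless.irrefl c (h ▸ hc _ (e i).2)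
  let f : Unit ⊕ Fin m → V := Sum.elim (fun _ => c) (fun i => e i)
  have hf : f.Injective := by
    rintro (_ | i) (_ | j) h
    · rfl
    · exact absurd h (hcB j)
    · exact absurd h.symm (hcB i)
    · simpa using e.injective (Subtype.ext h)
  refine ⟨⟨f, hf⟩, ?_⟩
  rintro (_ | i) (_ | j) <;> simp only [Function.Embedding.coeFn_mk, f, Sum.elim_inl, Sum.elim_inr]
  · simp [_root_.starGraph]
  · simpa [_root_.starGraph] using hc _ (e j).2
  · simpa [_root_.starGraph, G.adj_comm] using hc _ (e i).2
  · simp only [_root_.starGraph, completeBipartiteGraph_adj, Sum.isLeft_inr,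
      Bool.false_eq_true, false_and, Sum.isRight_inr, and_false, or_self, iff_false]
    intro h
    exact hB.isIndepSet (e i).2 (e j).2 h.ne h

theorem degree_lt_choose [Fintype V] [DecidableRel G.Adj] {n : ℕ} (hn : 1 ≤ n)
    (hK : ¬ HasInducedCopy G (completeGraph (Fin n))) (hS : ¬ HasInducedCopy G (_root_.starGraph n))
    (v : V) : G.degree v < (2 * n - 1).choose (n - 1) := by
  classical
  by_contra! h
  rw [← card_neighborFinset_eq_degree, show 2 * n - 1 = n - 1 + n by omega] at h
  obtain ⟨B, hB, hcl⟩ | ⟨B, hB, hcl⟩ := exists_isNClique_or_isNClique_compl G (n - 1) n _ h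
  · have hcl' := hcl.insert (a := v) fun b hb => (mem_neighborFinset _ _ _).1 (hB hb)
    rw [Nat.sub_add_cancel hn] at hcl'
    exact hK (hasInducedCopy_iff.2 ⟨topEmbeddingOfNotCliqueFree hcl'.not_cliqueFree⟩)
  · exact hS (hasInducedCopy_starGraph ((isNClique_compl G).1 hcl)
      fun b hb => (mem_neighborFinset _ _ _).1 (hB hb))

theorem dist_le_of_adj_succ {f : ℕ → V} {j : ℕ} (hf : ∀ i < j, G.Adj (f i) (f (i + 1))) :
    G.dist (f 0) (f j) ≤ j := by
  induction j with
  | zero => simp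
  | succ j ih =>
    have := (hf j j.lt_succ_self).diff_dist_adj (u := f 0)
    have := ih fun i hi => hf i (by omega)
    omega

def IsInducedPath (G : SimpleGraph V) (k : ℕ) (f : ℕ → V) : Prop :=
  (∀ i < k, ∀ j < k, f i = f j → i = j) ∧
    ∀ i < k, ∀ j < k, G.Adj (f i) (f j) ↔ i + 1 = j ∨ j + 1 = i

def pathJoin (q : ℕ → V) (k : ℕ) (u : V) (r : ℕ → V) (i : ℕ) : V :=
  if i < k then q i else if i = k then u else r (i - (k + 1))

theorem forall_lt_pathJoin {P : ℕ → V → Prop} {k l : ℕ} {q r : ℕ → V} {u : V}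
    (hq : ∀ i < k, P i (q i)) (hu : P k u) (hr : ∀ j < l, P (k + 1 + j) (r j)) :
    ∀ i < k + 1 + l, P i (pathJoin q k u r i) := by
  intro i hi
  unfold pathJoin
  split_ifs with h₁ h₂
  · exact hq i h₁
  · rwa [h₂]
  · simpa [show k + 1 + (i - (k + 1)) = i by omega] using hr (i - (k + 1)) (by omega)

namespace IsInducedPath

variable {k l m : ℕ} {f p q r : ℕ → V}

theorem mono (hf : G.IsInducedPath k f) (hlk : l ≤ k) : G.IsInducedPath l f :=
  ⟨fun i hi j hj => hf.1 i (by omega) j (by omega),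
    fun i hi j hj => hf.2 i (by omega) j (by omega)⟩

theorem adj_succ (hf : G.IsInducedPath k f) {i : ℕ} (hi : i + 1 < k) : G.Adj (f i) (f (i + 1)) :=
  (hf.2 i (by omega) (i + 1) hi).2 (by omega)

theorem ne (hf : G.IsInducedPath k f) {i j : ℕ} (hi : i < k) (hj : j < k) (hij : i ≠ j) :
    f i ≠ f j :=
  fun h => hij (hf.1 i hi j hj h)

theorem not_adj (hf : G.IsInducedPath k f) {i j : ℕ} (hi : i < k) (hj : j < k)
    (hij : i + 1 ≠ j ∧ j + 1 ≠ i) : ¬ G.Adj (f i) (f j) := by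
  rw [hf.2 i hi j hj]; omega

theorem dist_le (hf : G.IsInducedPath k f) {i j : ℕ} (hij : i ≤ j) (hj : j < k) :
    G.dist (f i) (f j) ≤ j - i := by
  simpa [Nat.add_sub_cancel' hij] using
    dist_le_of_adj_succ (f := fun s => f (i + s)) (j := j - i) fun s hs => hf.adj_succ (by omega)

theorem shift (hp : G.IsInducedPath m p) {c : ℕ} (hc : c + l ≤ m) :
    G.IsInducedPath l (fun i => p (c + i)) :=
  ⟨fun i hi j hj h => by have := hp.1 _ (by omega) _ (by omega) h; omega,
    fun i hi j hj => by rw [hp.2 _ (by omega) _ (by omega)]; omega⟩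

theorem reverse (hp : G.IsInducedPath m p) : G.IsInducedPath m (fun i => p (m - 1 - i)) :=
  ⟨fun i hi j hj h => by have := hp.1 _ (by omega) _ (by omega) h; omega,
    fun i hi j hj => by rw [hp.2 _ (by omega) _ (by omega)]; omega⟩

theorem one (v : V) : G.IsInducedPath 1 (fun _ => v) :=
  ⟨fun i hi j hj _ => by omega, fun i hi j hj => by simp; omega⟩

theorem append (hq : G.IsInducedPath k q) (hr : G.IsInducedPath l r)
    (hne : ∀ i < k, ∀ j < l, q i ≠ r j)
    (hadj : ∀ i < k, ∀ j < l, G.Adj (q i) (r j) ↔ i + 1 = k ∧ j = 0) :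
    G.IsInducedPath (k + l) (fun i => if i < k then q i else r (i - k)) := by
  refine ⟨fun i hi j hj h => ?_, fun i hi j hj => ?_⟩
  · dsimp only at h
    split_ifs at h with h₁ h₂ h₂
    · exact hq.1 i h₁ j h₂ h
    · exact absurd h (hne i h₁ _ (by omega))
    · exact absurd h.symm (hne j h₂ _ (by omega))
    · have := hr.1 _ (by omega) _ (by omega) h; omega
  · dsimp only
    split_ifs with h₁ h₂ h₂
    · exact hq.2 i h₁ j h₂
    · rw [hadj i h₁ _ (by omega)]; omega
    · rw [G.adj_comm, hadj j h₂ _ (by omega)]; omega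
    · rw [hr.2 _ (by omega) _ (by omega)]; omega

theorem join {k l : ℕ} {q r : ℕ → V} {u : V} (hq : G.IsInducedPath k q)
    (hr : G.IsInducedPath l r) (huq : ∀ i < k, u ≠ q i ∧ (G.Adj u (q i) ↔ i + 1 = k))
    (hur : ∀ j < l, u ≠ r j ∧ (G.Adj u (r j) ↔ j = 0))
    (hqr : ∀ i < k, ∀ j < l, q i ≠ r j ∧ ¬ G.Adj (q i) (r j)) :
    G.IsInducedPath (k + 1 + l) (pathJoin q k u r) := by
  have := (hq.append (IsInducedPath.one u) (fun i hi _ _ => (huq i hi).1.symm)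
    fun i hi j hj => ?_).append hr (fun i hi j hj => ?_) fun i hi j hj => ?_
  · convert this using 1
    funext i
    simp only [pathJoin]
    split_ifs <;> first | rfl | omega
  · rw [G.adj_comm, (huq i hi).2]; omega
  · split_ifs with h
    exacts [(hqr i h j hj).1, (hur j hj).1]
  · split_ifs with h
    · simp only [(hqr i h j hj).2, false_iff]; omega
    · rw [(hur j hj).2]; omega

theorem card_le [Fintype V] (hf : G.IsInducedPath k f) : k ≤ Fintype.card V := by
  simpa using Finset.card_le_card_of_injOn f (s := Finset.range k) (t := Finset.univ)
    (fun _ _ => Finset.mem_univ _)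
    (fun i hi j hj h => hf.1 i (Finset.mem_range.1 hi) j (Finset.mem_range.1 hj) h)

theorem isInducedPathSet (hf : G.IsInducedPath k f) (hk : 1 ≤ k) :
    IsInducedPathSet G (f '' Set.Iio k) := by
  let e : Fin k ≃ f '' Set.Iio k := Equiv.ofBijective (fun i => ⟨f i, i, i.2, rfl⟩)
    ⟨fun i j h => Fin.ext (hf.1 i i.2 j j.2 (congrArg Subtype.val h)),
      fun ⟨_, i, hi, rfl⟩ => ⟨⟨i, hi⟩, rfl⟩⟩
  refine ⟨k, hk, ⟨(⟨e, fun {i j} => ?_⟩ : pathGraph k ≃g G.induce _).symm⟩⟩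
  simpa [e, Equiv.ofBijective, pathGraph_adj] using hf.2 i i.2 j j.2

end IsInducedPath

theorem Connected.exists_isInducedPath_dist (hG : G.Connected) (u v : V) :
    ∃ q : ℕ → V, q 0 = u ∧ q (G.dist u v) = v ∧ (∀ i ≤ G.dist u v, G.dist u (q i) = i) ∧
      G.IsInducedPath (G.dist u v + 1) q := by
  obtain ⟨w, hw⟩ := hG.exists_walk_length_eq_dist u v
  set d := G.dist u v
  have hchain : ∀ i < d, G.Adj (w.getVert i) (w.getVert (i + 1)) :=
    fun i hi => w.adj_getVert_succ (by omega)
  have hdist : ∀ i ≤ d, G.dist u (w.getVert i) = i := by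
    intro i hi
    have h₁ : G.dist u (w.getVert i) ≤ i := by
      simpa using dist_le_of_adj_succ (f := w.getVert) fun s hs => hchain s (by omega)
    have h₂ := dist_le_of_adj_succ (f := fun s => w.getVert (i + s)) (j := d - i)
      fun s hs => hchain (i + s) (by omega)
    rw [add_zero, Nat.add_sub_cancel' hi, ← hw, w.getVert_length] at h₂
    have := hG.dist_triangle (u := u) (v := w.getVert i) (w := v)
    omega
  refine ⟨w.getVert, by simp, by simp [← hw], hdist, fun i hi j hj h => ?_, fun i hi j hj => ?_⟩
  · calc i = G.dist u (w.getVert i) := (hdist i (by omega)).symm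
      _ = j := by rw [h, hdist j (by omega)]
  · constructor
    · intro h
      have := h.diff_dist_adj (u := u)
      rw [hdist i (by omega), hdist j (by omega)] at this
      have : i ≠ j := by rintro rfl; exact h.ne rfl
      omega
    · rintro (rfl | rfl)
      exacts [hchain i (by omega), (hchain j (by omega)).symm]

theorem Connected.exists_isInducedPath_to (hG : G.Connected) {m : ℕ} {p : ℕ → V} (hm : 1 ≤ m)
    {v : V} (hv : ∀ k < m, p k ≠ v) :
    ∃ t q, 1 ≤ t ∧ q 0 = v ∧ G.IsInducedPath (t + 1) q ∧ (∀ i ≤ t, G.dist v (q i) = i) ∧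
      (∀ i < t, ∀ k < m, q i ≠ p k) ∧ (∀ i, i + 1 < t → ∀ k < m, ¬ G.Adj (q i) (p k)) ∧
      ∃ k < m, G.Adj (q (t - 1)) (p k) := by
  obtain ⟨ks, hks, hmin⟩ := (Finset.range m).exists_min_image (fun k => G.dist v (p k))
    ⟨0, by simp; omega⟩
  simp only [Finset.mem_range] at hks hmin
  obtain ⟨q, hq0, hqt, hqd, hq⟩ := hG.exists_isInducedPath_dist v (p ks)
  have ht : 1 ≤ G.dist v (p ks) := hG.pos_dist_of_ne (hv ks hks).symm
  refine ⟨_, q, ht, hq0, hq, hqd, fun i hi k hk h => ?_, fun i hi k hk h => ?_, ks, hks, ?_⟩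
  · have := hqd i hi.le
    have := hmin k hk
    rw [h] at *
    omega
  · have := h.diff_dist_adj (u := v)
    have := hmin k hk
    rw [hqd i (by omega)] at *
    omega
  · have := hq.adj_succ (i := G.dist v (p ks) - 1) (by omega)
    rwa [Nat.sub_add_cancel ht, hqt] at this

theorem exists_longest_isInducedPath [Fintype V] [Nonempty V] (G : SimpleGraph V) :
    ∃ m p, G.IsInducedPath m p ∧ 1 ≤ m ∧ ∀ k f, G.IsInducedPath k f → k ≤ m := by
  classical
  have h₁ : G.IsInducedPath 1 (fun _ => Classical.arbitrary V) := IsInducedPath.one _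
  obtain ⟨p, hp⟩ :=
    Nat.findGreatest_spec (P := fun k => ∃ f, G.IsInducedPath k f) h₁.card_le ⟨_, h₁⟩
  exact ⟨_, p, hp, Nat.le_findGreatest h₁.card_le ⟨_, h₁⟩,
    fun k f hf => Nat.le_findGreatest hf.card_le ⟨f, hf⟩⟩

theorem Connected.card_filter_dist_le [Fintype V] [DecidableRel G.Adj] (hG : G.Connected)
    {D : ℕ} (hD : ∀ v, G.degree v ≤ D) (u : V) (r : ℕ) :
    (Finset.univ.filter fun v => G.dist u v ≤ r).card ≤ (D + 1) ^ r := by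
  classical
  induction r with
  | zero =>
    refine (Finset.card_le_one.2 fun v hv w hw => ?_).trans (by simp)
    simp only [Finset.mem_filter, nonpos_iff_eq_zero, hG.dist_eq_zero_iff] at hv hw
    exact hv.2.symm.trans hw.2
  | succ r ih =>
    have hsub : (Finset.univ.filter fun v => G.dist u v ≤ r + 1) ⊆
        (Finset.univ.filter fun v => G.dist u v ≤ r).biUnion
          fun v => insert v (G.neighborFinset v) := by
      intro w hw
      simp only [Finset.mem_filter, Finset.mem_univ, true_and] at hw
      simp only [Finset.mem_biUnion, Finset.mem_filter, Finset.mem_univ, true_and,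
        Finset.mem_insert, mem_neighborFinset]
      rcases hw.lt_or_eq with hw | hw
      · exact ⟨w, by omega, Or.inl rfl⟩
      · obtain ⟨q, -, hq, hqd, hqp⟩ := hG.exists_isInducedPath_dist u w
        refine ⟨q r, (hqd r (by omega)).le, Or.inr ?_⟩
        have := hqp.adj_succ (i := r) (by omega)
        rwa [← hw, hq] at this
    calc _ ≤ _ := Finset.card_le_card hsub
      _ ≤ ∑ v ∈ Finset.univ.filter (fun v => G.dist u v ≤ r), (D + 1) :=
          Finset.card_biUnion_le.trans <| Finset.sum_le_sum fun v _ =>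
            (Finset.card_insert_le _ _).trans (by simpa using hD v)
      _ ≤ (D + 1) ^ (r + 1) := by
          rw [Finset.sum_const, smul_eq_mul, pow_succ]
          exact Nat.mul_le_mul_right _ ih

def apexPathAdj (N : ℕ → Prop) : Option ℕ → Option ℕ → Prop
  | some i, some j => i + 1 = j ∨ j + 1 = i
  | some i, none => N i
  | none, some j => N j
  | none, none => False

theorem hasInducedCopy_of_apexPath {W : Type*} {H : SimpleGraph W} {L : ℕ} {f : ℕ → V} {x : V}
    {N : ℕ → Prop} (hf : G.IsInducedPath L f) (hx : ∀ i < L, x ≠ f i)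
    (hxN : ∀ i < L, G.Adj x (f i) ↔ N i) (pos : W → Option ℕ) (hpos : pos.Injective)
    (hposL : ∀ w i, pos w = some i → i < L)
    (hH : ∀ a b, H.Adj a b ↔ apexPathAdj N (pos a) (pos b)) :
    HasInducedCopy G H := by
  have key : ∀ a b, G.Adj ((pos a).elim x f) ((pos b).elim x f) ↔ H.Adj a b := by
    intro a b
    rw [hH]
    cases ha : pos a <;> cases hb : pos b
    · simp [apexPathAdj]
    · simpa [apexPathAdj] using hxN _ (hposL b _ hb)
    · simpa [apexPathAdj, G.adj_comm] using hxN _ (hposL a _ ha)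
    · exact hf.2 _ (hposL a _ ha) _ (hposL b _ hb)
  refine ⟨⟨fun w => (pos w).elim x f, fun a b hab => hpos ?_⟩, key⟩
  cases ha : pos a <;> cases hb : pos b <;> simp only [ha, hb, Option.elim] at hab
  · rfl
  · exact absurd hab (hx _ (hposL b _ hb))
  · exact absurd hab.symm (hx _ (hposL a _ ha))
  · rw [hf.1 _ (hposL a _ ha) _ (hposL b _ hb) hab]

theorem hasInducedCopy_F1 {n : ℕ} {f : ℕ → V} {x : V} (hf : G.IsInducedPath (2 * n + 1) f)
    (hx : ∀ i < 2 * n + 1, x ≠ f i) (hxN : ∀ i < 2 * n + 1, G.Adj x (f i) ↔ i = n) :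
    HasInducedCopy G (F1 n) := by
  refine hasInducedCopy_of_apexPath hf hx hxN
    (Sum.elim ![some n, none] (Sum.elim (fun i => some (n - 1 - i)) (fun i => some (n + 1 + i))))
    ?_ ?_ ?_
  · rintro (s | i | i) (t | j | j) h <;> (try fin_cases s) <;> (try fin_cases t) <;>
      simp at h ⊢ <;> (try simp only [Fin.ext_iff]) <;> omega
  · rintro (s | i | i) k h <;> (try fin_cases s) <;> simp at h <;> omega
  · rintro (s | i | i) (t | j | j) <;> (try fin_cases s) <;> (try fin_cases t) <;>
      simp [F1, fromRel_adj, apexPathAdj] <;> (try simp only [Fin.ext_iff]) <;> omega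

theorem hasInducedCopy_F2 {n : ℕ} {f : ℕ → V} {x : V} (hf : G.IsInducedPath (2 * n) f)
    (hx : ∀ i < 2 * n, x ≠ f i) (hxN : ∀ i < 2 * n, G.Adj x (f i) ↔ i + 1 = n ∨ i = n) :
    HasInducedCopy G (F2 n) := by
  refine hasInducedCopy_of_apexPath hf hx hxN
    (Sum.elim (fun _ => none) (Sum.elim (fun i => some (n - 1 - i)) (fun i => some (n + i))))
    ?_ ?_ ?_
  · rintro (s | i | i) (t | j | j) h <;> simp at h ⊢ <;> (try simp only [Fin.ext_iff]) <;> omega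
  · rintro (s | i | i) k h <;> simp at h <;> omega
  · rintro (s | i | i) (t | j | j) <;>
      simp [F2, fromRel_adj, apexPathAdj] <;> (try simp only [Fin.ext_iff]) <;> omega

theorem hasInducedCopy_F4 {n : ℕ} {f : ℕ → V} {x : V} (hf : G.IsInducedPath (2 * n + 1) f)
    (hx : ∀ i < 2 * n + 1, x ≠ f i)
    (hxN : ∀ i < 2 * n + 1, G.Adj x (f i) ↔ i + 1 = n ∨ i = n + 1) :
    HasInducedCopy G (F4 n) := by
  refine hasInducedCopy_of_apexPath hf hx hxN
    (Sum.elim ![none, some n] (Sum.elim (fun i => some (n - 1 - i)) (fun i => some (n + 1 + i))))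
    ?_ ?_ ?_
  · rintro (s | i | i) (t | j | j) h <;> (try fin_cases s) <;> (try fin_cases t) <;>
      simp at h ⊢ <;> (try simp only [Fin.ext_iff]) <;> omega
  · rintro (s | i | i) k h <;> (try fin_cases s) <;> simp at h <;> omega
  · rintro (s | i | i) (t | j | j) <;> (try fin_cases s) <;> (try fin_cases t) <;>
      simp [F4, fromRel_adj, apexPathAdj] <;> (try simp only [Fin.ext_iff]) <;> omega

theorem hasInducedCopy_F5 {n : ℕ} {f : ℕ → V} {x : V} (hf : G.IsInducedPath (2 * n + 1) f)
    (hx : ∀ i < 2 * n + 1, x ≠ f i)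
    (hxN : ∀ i < 2 * n + 1, G.Adj x (f i) ↔ n ≤ i + 1 ∧ i ≤ n + 1) :
    HasInducedCopy G (F5 n) := by
  refine hasInducedCopy_of_apexPath hf hx hxN
    (Sum.elim ![none, some n] (Sum.elim (fun i => some (n - 1 - i)) (fun i => some (n + 1 + i))))
    ?_ ?_ ?_
  · rintro (s | i | i) (t | j | j) h <;> (try fin_cases s) <;> (try fin_cases t) <;>
      simp at h ⊢ <;> (try simp only [Fin.ext_iff]) <;> omega
  · rintro (s | i | i) k h <;> (try fin_cases s) <;> simp at h <;> omega
  · rintro (s | i | i) (t | j | j) <;> (try fin_cases s) <;> (try fin_cases t) <;>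
      simp [F5, fromRel_adj, apexPathAdj] <;> (try simp only [Fin.ext_iff]) <;> omega

def HasInducedF (n : ℕ) (G : SimpleGraph V) : Prop :=
  HasInducedCopy G (F1 n) ∨ HasInducedCopy G (F2 n) ∨ HasInducedCopy G (F4 n) ∨
    HasInducedCopy G (F5 n)

/-- The vertex `u` lies off the induced path `p`, is adjacent to `p a` and `p b`, and to none of
the `n` path vertices beyond either of them. -/
structure AttachesAt (G : SimpleGraph V) (n m : ℕ) (p : ℕ → V) (u : V) (a b : ℕ) : Prop where
  isInducedPath : G.IsInducedPath m p
  ne : ∀ k < m, u ≠ p k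
  le_left : n ≤ a
  lt_right : b + n < m
  adj_left : G.Adj u (p a)
  adj_right : G.Adj u (p b)
  not_adj_left : ∀ k, a ≤ k + n → k < a → ¬ G.Adj u (p k)
  not_adj_right : ∀ k, b < k → k ≤ b + n → ¬ G.Adj u (p k)

namespace AttachesAt

variable {n m a b : ℕ} {p : ℕ → V} {u : V}

theorem adj_iff (h : G.AttachesAt n m p u a b) {Q : ℕ → Prop} (hQa : Q a) (hQb : Q b)
    (hQout : ∀ k, k < a ∨ b < k → ¬ Q k) (hmid : ∀ k, a < k → k < b → (G.Adj u (p k) ↔ Q k))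
    (k : ℕ) (hk₁ : a ≤ k + n) (hk₂ : k ≤ b + n) : G.Adj u (p k) ↔ Q k := by
  rcases lt_trichotomy k a with hka | rfl | hka
  · exact iff_of_false (h.not_adj_left k hk₁ hka) (hQout k (.inl hka))
  · exact iff_of_true h.adj_left hQa
  rcases lt_trichotomy k b with hkb | rfl | hkb
  · exact hmid k hka hkb
  · exact iff_of_true h.adj_right hQb
  · exact iff_of_false (h.not_adj_right k hkb hk₂) (hQout k (.inr hkb))

theorem hasInducedF_of_le_add_two (h : G.AttachesAt n m p u a b) (hab : a ≤ b)
    (hba : b ≤ a + 2) : HasInducedF n G := by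
  have hp := h.isInducedPath
  have hu := h.ne
  have := h.le_left
  have := h.lt_right
  rcases (by omega : a = b ∨ b = a + 1 ∨ b = a + 2) with rfl | rfl | rfl
  · have hN := h.adj_iff (Q := (· = a)) rfl rfl (by omega) (by omega)
    refine .inl <| hasInducedCopy_F1 (hp.shift (c := a - n) (by omega))
      (fun i hi => hu _ (by omega)) fun i hi => ?_
    rw [hN _ (by omega) (by omega)]; omega
  · have hN := h.adj_iff (Q := fun k => k = a ∨ k = a + 1) (.inl rfl) (.inr rfl) (by omega)
      (by omega)
    refine .inr <| .inl <| hasInducedCopy_F2 (hp.shift (c := a + 1 - n) (by omega))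
      (fun i hi => hu _ (by omega)) fun i hi => ?_
    rw [hN _ (by omega) (by omega)]; omega
  by_cases hmid : G.Adj u (p (a + 1))
  · have hN := h.adj_iff (Q := fun k => a ≤ k ∧ k ≤ a + 2) (by omega) (by omega) (by omega)
      fun k h₁ h₂ => by obtain rfl : k = a + 1 := by omega
                        exact iff_of_true hmid (by omega)
    refine .inr <| .inr <| .inr <| hasInducedCopy_F5 (hp.shift (c := a + 1 - n) (by omega))
      (fun i hi => hu _ (by omega)) fun i hi => ?_
    rw [hN _ (by omega) (by omega)]; omega
  · have hN := h.adj_iff (Q := fun k => k = a ∨ k = a + 2) (.inl rfl) (.inr rfl) (by omega)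
      fun k h₁ h₂ => by obtain rfl : k = a + 1 := by omega
                        exact iff_of_false hmid (by omega)
    refine .inr <| .inr <| .inl <| hasInducedCopy_F4 (hp.shift (c := a + 1 - n) (by omega))
      (fun i hi => hu _ (by omega)) fun i hi => ?_
    rw [hN _ (by omega) (by omega)]; omega

theorem hasInducedF_of_add_three_le (h : G.AttachesAt n m p u a b) (hn : 1 ≤ n) (hab : a + 3 ≤ b) :
    HasInducedF n G := by
  obtain ⟨hp, hu, ha, hb, hua, hub, hbelow, habove⟩ := h
  -- `p (a + 1)` hangs off the induced path `p (a + 1 - k), …, p a, u, p b, …, p (b + n - 2)`.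
  have hjoin : ∀ k, 1 ≤ k → k ≤ n + 1 → G.IsInducedPath (k + 1 + (n - 1))
      (pathJoin (fun i => p (a + 1 - k + i)) k u (fun j => p (b + j))) := by
    intro k hk₁ hk₂
    refine (hp.shift (c := a + 1 - k) (l := k) (by omega)).join
      (hp.shift (c := b) (l := n - 1) (by omega)) (fun i hi => ⟨hu _ (by omega), ?_⟩)
      (fun j hj => ⟨hu _ (by omega), ?_⟩) fun i hi j hj =>
        ⟨hp.ne (by omega) (by omega) (by omega), hp.not_adj (by omega) (by omega) (by omega)⟩
    · by_cases h : i + 1 = k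
      · exact iff_of_true (by convert hua using 3; omega) h
      · exact iff_of_false (hbelow _ (by omega) (by omega)) h
    · by_cases h : j = 0
      · exact iff_of_true (by simpa [h] using hub) h
      · exact iff_of_false (habove _ (by omega) (by omega)) h
  have hx : ∀ k, 1 ≤ k → k ≤ n + 1 → ∀ i < k + 1 + (n - 1),
      p (a + 1) ≠ pathJoin (fun i => p (a + 1 - k + i)) k u (fun j => p (b + j)) i :=
    fun k hk₁ hk₂ => forall_lt_pathJoin (P := fun _ v => p (a + 1) ≠ v)
      (fun i hi => hp.ne (by omega) (by omega) (by omega)) (hu _ (by omega)).symm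
      (fun j hj => hp.ne (by omega) (by omega) (by omega))
  by_cases hmid : G.Adj u (p (a + 1))
  · refine .inr <| .inl <| hasInducedCopy_F2 ((hjoin n (by omega) le_self_add).mono (by omega))
      (fun i hi => hx n (by omega) le_self_add i (by omega)) fun i hi => ?_
    refine forall_lt_pathJoin (l := n - 1) (P := fun i v => G.Adj (p (a + 1)) v ↔ i + 1 = n ∨ i = n)
      (fun i hi => ?_) (iff_of_true hmid.symm (by omega)) (fun j hj => ?_) i (by omega)
    all_goals rw [hp.2 _ (by omega) _ (by omega)]; omega
  · refine .inl <| hasInducedCopy_F1 ((hjoin (n + 1) (by omega) le_rfl).mono (by omega))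
      (fun i hi => hx (n + 1) (by omega) le_rfl i (by omega)) fun i hi => ?_
    refine forall_lt_pathJoin (l := n - 1) (P := fun i v => G.Adj (p (a + 1)) v ↔ i = n)
      (fun i hi => ?_) (iff_of_false (fun h => hmid h.symm) (by omega)) (fun j hj => ?_) i
      (by omega)
    all_goals rw [hp.2 _ (by omega) _ (by omega)]; omega

theorem hasInducedF (h : G.AttachesAt n m p u a b) (hn : 1 ≤ n) (hab : a ≤ b) :
    HasInducedF n G := by
  by_cases hba : b ≤ a + 2
  exacts [h.hasInducedF_of_le_add_two hab hba, h.hasInducedF_of_add_three_le hn (by omega)]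

end AttachesAt

namespace IsInducedPath

variable {n m : ℕ} {p : ℕ → V} {u : V}

theorem card_filter_adj_le [DecidableRel G.Adj] (hp : G.IsInducedPath m p)
    (hS : ¬ HasInducedCopy G (_root_.starGraph n)) :
    ((Finset.range m).filter fun k => G.Adj u (p k)).card ≤ 2 * (n - 1) := by
  classical
  set S := (Finset.range m).filter fun k => G.Adj u (p k)
  have hmem : ∀ k ∈ S, k < m ∧ G.Adj u (p k) := fun k hk => by simpa [S] using hk
  have hpar : ∀ T ⊆ S, (∀ i ∈ T, ∀ j ∈ T, i % 2 = j % 2) → T.card < n := by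
    intro T hT hpar
    by_contra! h
    obtain ⟨T', hT', hc⟩ := Finset.exists_subset_card_eq h
    have hinj : Set.InjOn p T' := fun i hi j hj h =>
      hp.1 i (hmem i (hT (hT' hi))).1 j (hmem j (hT (hT' hj))).1 h
    refine hS (hasInducedCopy_starGraph (c := u) (B := T'.image p) ⟨?_, ?_⟩ ?_)
    · simp only [Finset.coe_image]
      rintro _ ⟨i, hi, rfl⟩ _ ⟨j, hj, rfl⟩ hne
      have hi' := hmem i (hT (hT' hi))
      have hj' := hmem j (hT (hT' hj))
      have := hpar i (hT' hi) j (hT' hj)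
      have : i ≠ j := by rintro rfl; exact hne rfl
      exact hp.not_adj hi'.1 hj'.1 (by omega)
    · rwa [Finset.card_image_of_injOn hinj]
    · simp only [Finset.mem_image]
      rintro _ ⟨i, hi, rfl⟩
      exact (hmem i (hT (hT' hi))).2
  have h₀ := hpar (S.filter fun k => k % 2 = 0) (Finset.filter_subset _ _)
    fun i hi j hj => by simp only [Finset.mem_filter] at hi hj; omega
  have h₁ := hpar (S.filter fun k => ¬ k % 2 = 0) (Finset.filter_subset _ _)
    fun i hi j hj => by simp only [Finset.mem_filter] at hi hj; omega
  have := Finset.card_filter_add_card_filter_not (s := S) (fun k => k % 2 = 0)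
  omega

theorem lt_or_le_of_adj (hn : 1 ≤ n) (hF : ¬ HasInducedF n G)
    (hS : ¬ HasInducedCopy G (_root_.starGraph n)) (hp : G.IsInducedPath m p)
    (hu : ∀ k < m, u ≠ p k) {k₀ : ℕ} (hk₀ : k₀ < m) (hadj : G.Adj u (p k₀)) :
    k₀ < (2 * n - 1) * (n + 2) ∨ m ≤ k₀ + (2 * n - 1) * (n + 2) + 1 := by
  classical
  set C := (2 * n - 1) * (n + 2)
  set S := (Finset.range m).filter fun k => G.Adj u (p k)
  have hmem : ∀ k, k ∈ S ↔ k < m ∧ G.Adj u (p k) := fun k => by simp [S]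
  have hcard : S.card < 2 * n - 1 := by
    have : S.card ≤ 2 * (n - 1) := hp.card_filter_adj_le hS
    omega
  by_contra! h
  -- Windows of `n + 2` non-neighbours of `u` among the first and among the last `C` vertices
  -- of `p`; the outermost neighbours between them are feet of `u`.
  obtain ⟨A, -, hA, hAS⟩ := S.exists_gap_of_card_lt hcard 0 (n + 2)
  obtain ⟨B, hB, hB', hBS⟩ := S.exists_gap_of_card_lt hcard (m - C) (n + 2)
  set M := S.filter fun k => A + n + 2 ≤ k ∧ k < B
  have hM : ∀ k, k ∈ M ↔ k ∈ S ∧ A + n + 2 ≤ k ∧ k < B := fun k => by simp [M]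
  have hk₀M : k₀ ∈ M := (hM k₀).2 ⟨(hmem k₀).2 ⟨hk₀, hadj⟩, by omega, by omega⟩
  have ha := (hM _).1 (M.min'_mem ⟨k₀, hk₀M⟩)
  have hb := (hM _).1 (M.max'_mem ⟨k₀, hk₀M⟩)
  refine hF (AttachesAt.hasInducedF (a := M.min' ⟨k₀, hk₀M⟩) (b := M.max' ⟨k₀, hk₀M⟩)
    ⟨hp, hu, by omega, by omega, ((hmem _).1 ha.1).2, ((hmem _).1 hb.1).2,
      fun k h₁ h₂ hk => ?_, fun k h₁ h₂ hk => ?_⟩ hn (M.min'_le _ (M.max'_mem _)))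
  · have hkS := (hmem k).2 ⟨by omega, hk⟩
    have := hAS k hkS
    exact absurd (M.min'_le k ((hM k).2 ⟨hkS, by omega, by omega⟩)) (by omega)
  · have hkS := (hmem k).2 ⟨by omega, hk⟩
    have := hBS k hkS
    exact absurd (M.le_max' k ((hM k).2 ⟨hkS, by omega, by omega⟩)) (by omega)

theorem le_of_append (hp : G.IsInducedPath m p) (hmax : ∀ k f, G.IsInducedPath k f → k ≤ m)
    {t j : ℕ} {q : ℕ → V} (hq : G.IsInducedPath t q) (hj : j < m)
    (hqp : ∀ i < t, ∀ k < m, q i ≠ p k)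
    (hadj : ∀ i < t, ∀ k, j ≤ k → k < m → (G.Adj (q i) (p k) ↔ i + 1 = t ∧ k = j)) :
    t ≤ j := by
  have := hmax _ _ <| hq.append (hp.shift (c := j) (l := m - j) (by omega))
    (fun i hi s hs => hqp i hi _ (by omega))
    (fun i hi s hs => by rw [hadj i hi (j + s) (by omega) (by omega)]; omega)
  omega

theorem dist_le_of_forall_adj_le (hG : G.Connected) (hp : G.IsInducedPath m p)
    (hmax : ∀ k f, G.IsInducedPath k f → k ≤ m) {t D : ℕ} {q : ℕ → V} (ht : 1 ≤ t)
    (hq : G.IsInducedPath (t + 1) q) (hqd : ∀ i ≤ t, G.dist (q 0) (q i) = i)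
    (hqp : ∀ i < t, ∀ k < m, q i ≠ p k) (hqadj : ∀ i, i + 1 < t → ∀ k < m, ¬ G.Adj (q i) (p k))
    {j₀ : ℕ} (hj₀ : j₀ < m) (hqj₀ : G.Adj (q (t - 1)) (p j₀))
    (hD : ∀ k < m, G.Adj (q (t - 1)) (p k) → k ≤ D) :
    G.dist (p 0) (q 0) ≤ 2 * D := by
  classical
  set j := Nat.findGreatest (fun k => G.Adj (q (t - 1)) (p k)) (m - 1)
  have hj : j < m := by
    have := Nat.findGreatest_le (P := fun k => G.Adj (q (t - 1)) (p k)) (m - 1)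
    omega
  have hqj : G.Adj (q (t - 1)) (p j) :=
    Nat.findGreatest_spec (P := fun k => G.Adj (q (t - 1)) (p k)) (n := m - 1) (by omega) hqj₀
  -- `q 0, …, q (t - 1), p j, …, p (m - 1)` is an induced path, `p j` being the last neighbour
  -- of `q (t - 1)`.
  have htj : t ≤ j := hp.le_of_append hmax (hq.mono (by omega)) hj hqp fun i hi k hjk hk => by
    rcases (by omega : i + 1 < t ∨ i = t - 1) with h | rfl
    · exact iff_of_false (hqadj i h k hk) (by omega)
    rcases hjk.eq_or_lt with rfl | hjk
    · exact iff_of_true hqj (by omega)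
    · refine iff_of_false (fun h => ?_) (by omega)
      have := Nat.le_findGreatest (P := fun k => G.Adj (q (t - 1)) (p k)) (n := m - 1)
        (m := k) (by omega) h
      omega
  have h₁ := hp.dist_le (Nat.zero_le j) hj
  have h₂ := hG.dist_triangle (u := p 0) (v := p j) (w := q 0)
  have h₃ := hG.dist_triangle (u := p j) (v := q (t - 1)) (w := q 0)
  rw [dist_comm (u := q (t - 1)), hqd _ (by omega), dist_eq_one_iff_adj.2 hqj.symm] at h₃
  have := hD j hj hqj
  omega

theorem hasInducedCopy_F1_of_adj_adj (hp : G.IsInducedPath m p) (hu : ∀ k < m, u ≠ p k)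
    {x : V} (hx : ∀ k < m, x ≠ p k ∧ ¬ G.Adj x (p k)) (hxu : G.Adj x u) {a b : ℕ}
    (hn : 1 ≤ n) (hab : a + 2 * n ≤ b) (hb : b < m) (hua : G.Adj u (p a)) (hub : G.Adj u (p b))
    (hna : ∀ k, a < k → k < a + n → ¬ G.Adj u (p k))
    (hnb : ∀ k, b < k + n → k < b → ¬ G.Adj u (p k)) :
    HasInducedCopy G (F1 n) := by
  -- `x` hangs off the centre of the induced path `p (b + 1 - n), …, p b, u, p a, …, p (a + n - 1)`.
  have hjoin := (hp.shift (c := b + 1 - n) (l := n) (by omega)).join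
    (hp.shift (c := a) (l := n) (by omega)) (u := u) (fun i hi => ⟨hu _ (by omega), ?_⟩)
    (fun j hj => ⟨hu _ (by omega), ?_⟩) fun i hi j hj =>
      ⟨hp.ne (by omega) (by omega) (by omega), hp.not_adj (by omega) (by omega) (by omega)⟩
  · refine hasInducedCopy_F1 (x := x) (hjoin.mono (by omega)) (fun i hi => ?_) fun i hi => ?_
    · exact forall_lt_pathJoin (l := n) (P := fun _ v => x ≠ v)
        (fun i hi => (hx _ (by omega)).1) hxu.ne (fun j hj => (hx _ (by omega)).1) i (by omega)
    · exact forall_lt_pathJoin (l := n) (P := fun i v => G.Adj x v ↔ i = n)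
        (fun i hi => iff_of_false (hx _ (by omega)).2 (by omega)) (iff_of_true hxu rfl)
        (fun j hj => iff_of_false (hx _ (by omega)).2 (by omega)) i (by omega)
  · by_cases h : i + 1 = n
    · exact iff_of_true (by convert hub using 3; omega) h
    · exact iff_of_false (hnb _ (by omega) (by omega)) h
  · by_cases h : j = 0
    · exact iff_of_true (by simpa [h] using hua) h
    · exact iff_of_false (hna _ (by omega) (by omega)) h

theorem hasInducedCopy_F1_of_adj_near_both_ends (hp : G.IsInducedPath m p)
    (hu : ∀ k < m, u ≠ p k) {x : V} (hx : ∀ k < m, x ≠ p k ∧ ¬ G.Adj x (p k))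
    (hxu : G.Adj x u) (hn : 1 ≤ n) {C : ℕ} (hm : 2 * C + 2 * n + 2 ≤ m)
    (hnear : ∀ k < m, G.Adj u (p k) → k < C ∨ m ≤ k + C + 1)
    (hlo : ∃ k < m, G.Adj u (p k) ∧ k < C) (hhi : ∃ k < m, G.Adj u (p k) ∧ C ≤ k) :
    HasInducedCopy G (F1 n) := by
  classical
  obtain ⟨kl, hkl, hukl, hklC⟩ := hlo
  set a := Nat.findGreatest (fun k => G.Adj u (p k)) (C - 1)
  have ha : G.Adj u (p a) :=
    Nat.findGreatest_spec (P := fun k => G.Adj u (p k)) (m := kl) (by omega) hukl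
  have haC : a < C := by
    have := Nat.findGreatest_le (P := fun k => G.Adj u (p k)) (C - 1)
    omega
  obtain ⟨hb, hub, hbC⟩ := Nat.find_spec hhi
  have hbmin := fun k => Nat.find_min (m := k) hhi
  set b := Nat.find hhi
  have hbm : m ≤ b + C + 1 := (hnear b hb hub).resolve_left (by omega)
  refine hp.hasInducedCopy_F1_of_adj_adj hu hx hxu hn (a := a) (b := b) (by omega) hb ha hub
    (fun k h₁ h₂ h => ?_) fun k h₁ h₂ h => hbmin k h₂ ⟨by omega, h, by omega⟩
  by_cases hkC : k < C
  · have := Nat.le_findGreatest (P := fun k => G.Adj u (p k)) (n := C - 1) (m := k) (by omega) h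
    omega
  · exact hbmin k (by omega) ⟨by omega, h, by omega⟩

theorem exists_eq_or_dist_le (hG : G.Connected) (hn : 1 ≤ n) (hF : ¬ HasInducedF n G)
    (hS : ¬ HasInducedCopy G (_root_.starGraph n)) (hp : G.IsInducedPath m p)
    (hmax : ∀ k f, G.IsInducedPath k f → k ≤ m) (v : V) :
    (∃ k < m, p k = v) ∨ G.dist (p 0) v ≤ 2 * ((2 * n - 1) * (n + 2)) + 2 * n ∨
      G.dist (p (m - 1)) v ≤ 2 * ((2 * n - 1) * (n + 2)) + 2 * n := by
  set C := (2 * n - 1) * (n + 2)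
  by_cases hsmall : m ≤ 2 * C + 2 * n + 1
  · obtain ⟨q, -, -, -, hq⟩ := hG.exists_isInducedPath_dist (p 0) v
    have := hmax _ _ hq
    exact .inr (.inl (by omega))
  refine or_iff_not_imp_left.2 fun hv => ?_
  push Not at hv
  obtain ⟨t, q, ht, rfl, hq, hqd, hqp, hqadj, ks, hks, hut⟩ :=
    hG.exists_isInducedPath_to (by omega) hv
  have hu : ∀ k < m, q (t - 1) ≠ p k := hqp (t - 1) (by omega)
  have hnear := fun k hk => hp.lt_or_le_of_adj hn hF hS hu (k₀ := k) hk
  by_cases hlow : ∀ k < m, G.Adj (q (t - 1)) (p k) → k ≤ C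
  · have := hp.dist_le_of_forall_adj_le hG hmax ht hq hqd hqp hqadj hks hut hlow
    exact .inl (by omega)
  by_cases hhigh : ∀ k < m, G.Adj (q (t - 1)) (p k) → m ≤ k + C + 1
  · have := hp.reverse.dist_le_of_forall_adj_le hG hmax ht hq hqd
      (fun i hi k hk => hqp i hi _ (by omega)) (fun i hi k hk => hqadj i hi _ (by omega))
      (D := C) (j₀ := m - 1 - ks) (by omega) (by rwa [show m - 1 - (m - 1 - ks) = ks by omega])
      (fun k hk h => by have := hhigh (m - 1 - k) (by omega) h; omega)
    simp only [Nat.sub_zero] at this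
    exact .inr (by omega)
  push Not at hlow hhigh
  obtain ⟨kh, hkh, hukh, hkhC⟩ := hlow
  obtain ⟨kl, hkl, hukl, hklC⟩ := hhigh
  have hklC' : kl < C := by have := hnear kl hkl hukl; omega
  rcases (by omega : t = 1 ∨ 2 ≤ t) with ht1 | ht2
  · rw [show t - 1 = 0 by omega] at hukl
    have h₁ := hp.dist_le (Nat.zero_le kl) hkl
    have h₂ := hG.dist_triangle (u := p 0) (v := p kl) (w := q 0)
    rw [dist_eq_one_iff_adj.2 hukl.symm] at h₂
    exact .inl (by omega)
  · refine absurd (.inl <| hp.hasInducedCopy_F1_of_adj_near_both_ends hu (x := q (t - 2))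
      (fun k hk => ⟨hqp _ (by omega) k hk, hqadj _ (by omega) k hk⟩) ?_ (by omega) (C := C)
      (by omega) hnear ⟨kl, hkl, hukl, hklC'⟩ ⟨kh, hkh, hukh, by omega⟩) hF
    have := hq.adj_succ (i := t - 2) (by omega)
    rwa [show t - 2 + 1 = t - 1 by omega] at this

end IsInducedPath

theorem inpp_le_one_add_card {S : Set V} (hS : IsInducedPathSet G S) (T : Finset V)
    (hT : ∀ v ∉ S, v ∈ T) : inpp G ≤ 1 + T.card := by
  classical
  set P := insert S ((T.filter (· ∉ S)).image fun v => ({v} : Set V))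
  have hsingle : ∀ v : V, IsInducedPathSet G {v} := fun v => by
    simpa [(show (Set.Iio 1 : Set ℕ).Nonempty from ⟨0, Nat.zero_lt_one⟩).image_const] using
      (IsInducedPath.one (G := G) v).isInducedPathSet le_rfl
  have hP : IsPartitionBy P (IsInducedPathSet G) := by
    refine ⟨⟨fun S' hS' => ?_, fun v => ?_⟩, fun S₁ h₁ S₂ h₂ hne v hv₁ hv₂ => ?_⟩
    · obtain rfl | ⟨w, -, rfl⟩ := by simpa [P] using hS'
      exacts [hS, hsingle w]
    · by_cases hv : v ∈ S
      · exact ⟨S, Finset.mem_insert_self _ _, hv⟩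
      · exact ⟨{v}, by simp [P, hT v hv, hv], rfl⟩
    · simp only [P, Finset.mem_insert, Finset.mem_image, Finset.mem_filter] at h₁ h₂
      rcases h₁ with rfl | ⟨w₁, ⟨-, hw₁⟩, rfl⟩ <;> rcases h₂ with rfl | ⟨w₂, ⟨-, hw₂⟩, rfl⟩
      · exact hne rfl
      · exact hw₂ (by rwa [← Set.mem_singleton_iff.1 hv₂])
      · exact hw₁ (by rwa [← Set.mem_singleton_iff.1 hv₁])
      · obtain rfl := Set.mem_singleton_iff.1 hv₁
        obtain rfl := Set.mem_singleton_iff.1 hv₂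
        exact hne rfl
  calc inpp G ≤ P.card := Nat.sInf_le ⟨P, rfl, hP⟩
    _ ≤ 1 + T.card := by
      refine (Finset.card_insert_le _ _).trans ?_
      have := (Finset.card_image_le (s := T.filter (· ∉ S)) (f := fun v => ({v} : Set V))).trans
        (Finset.card_filter_le T _)
      omega

end SimpleGraph

theorem statement_10 (n : ℕ) (hn : 4 ≤ n) :
    ∃ c : ℕ, ∀ (V : Type) [Fintype V] (G : SimpleGraph V),
      G.Connected →
      ¬ HasInducedCopy G (completeGraph (Fin n)) →
      ¬ HasInducedCopy G (_root_.starGraph n) →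
      ¬ HasInducedCopy G (F1 n) →
      ¬ HasInducedCopy G (F2 n) →
      ¬ HasInducedCopy G (F4 n) →
      ¬ HasInducedCopy G (F5 n) →
      inpp G ≤ c := by
  set ρ := 2 * ((2 * n - 1) * (n + 2)) + 2 * n
  set D := (2 * n - 1).choose (n - 1)
  refine ⟨1 + 2 * (D + 1) ^ ρ, fun V _ G hG hK hS hF1 hF2 hF4 hF5 => ?_⟩
  classical
  have hF : ¬ HasInducedF n G := by rintro (h | h | h | h) <;> contradiction
  have : Nonempty V := hG.nonempty
  obtain ⟨m, p, hp, hm, hmax⟩ := G.exists_longest_isInducedPath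
  have hdeg : ∀ v, G.degree v ≤ D := fun v => (degree_lt_choose (by omega) hK hS v).le
  refine (inpp_le_one_add_card (hp.isInducedPathSet hm)
    ((Finset.univ.filter fun v => G.dist (p 0) v ≤ ρ) ∪
      Finset.univ.filter fun v => G.dist (p (m - 1)) v ≤ ρ) fun v hv => ?_).trans ?_
  · simp only [Finset.mem_union, Finset.mem_filter, Finset.mem_univ, true_and]
    rcases hp.exists_eq_or_dist_le hG (by omega) hF hS hmax v with ⟨k, hk, rfl⟩ | h | h
    exacts [absurd ⟨k, hk, rfl⟩ hv, .inl h, .inr h]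
  · have := (Finset.card_union_le _ _).trans (add_le_add (hG.card_filter_dist_le hdeg (p 0) ρ)
      (hG.card_filter_dist_le hdeg (p (m - 1)) ρ))
    omega
end

section
/- Let ℋ be a finite family of connected finite simple graphs. Then ℋ satisfies (P-insc) if and only if there exists an integer n ≥ 4 such that ℋ ≤ {K_n, S*_n, P_n}. -/
open SimpleGraph

/-!
For necessity, `K_{2c+2}`, `P_{3c+3}` and `S*_{c+1}` are connected with `insc > c`: an induced
star or `K_1` has at most two vertices in a complete graph, at most three in a path, and contains
at most one of the leaves `zᵢ` of `S*_{c+1}`. Hence `ℋ` meets the induced subgraphs of each of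
these three families, and so of `K_n`, `S*_n`, `P_n` for a single large `n`.

For sufficiency, let `G` be connected and `{K_m, S*_n, P_p}`-free. A shortest path is induced, so
`G` has diameter less than `p - 1`. If a set `T` of neighbours of `u` has private neighbours at
distance two from `u`, then Ramsey's theorem, applied once to `T` and once to the private
neighbours, gives a `K_m` or an `S*_n` as soon as `T` is large. So a minimal dominating set of
the second sphere around `u` inside `N(u)` is bounded, and growing balls from a single vertex
gives a dominating set `D` of bounded size. Induction on the clique number bounds `χ(G)`: colour
each vertex by its dominator and by its colour in the dominator's neighbourhood, whose clique
number is smaller. Finally the sets `{d} ∪ (N(d) ∩ Cⱼ)` for `d ∈ D` and colour classes `Cⱼ` are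
induced stars or singletons that cover `G`, so `insc G ≤ |D| χ(G)`.
-/

open Finset

namespace SimpleGraph

variable {V W : Type*} {G : SimpleGraph V} {H : SimpleGraph W}

theorem hasInducedCopy_iff_isIndContained : HasInducedCopy G H ↔ H ⊴ G :=
  ⟨fun ⟨f, hf⟩ => ⟨⟨f, hf _ _⟩⟩, fun ⟨f⟩ => ⟨f.toEmbedding, fun _ _ => f.map_rel_iff⟩⟩

theorem cliqueFree_iff_not_isIndContained {n : ℕ} :
    G.CliqueFree n ↔ ¬completeGraph (Fin n) ⊴ G := by
  rw [top_isIndContained_iff_top_isContained, ← not_cliqueFree_iff_top_isContained, not_not]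

theorem pathGraph_isIndContained_pathGraph {a n : ℕ} (h : a ≤ n) : pathGraph a ⊴ pathGraph n :=
  ⟨⟨Fin.castLEEmb h, by simp [pathGraph_adj]⟩⟩

theorem completeGraph_isIndContained_completeGraph {a n : ℕ} (h : a ≤ n) :
    completeGraph (Fin a) ⊴ completeGraph (Fin n) :=
  top_isIndContained_top_iff.mpr ⟨Fin.castLEEmb h⟩

section SStar

variable {n : ℕ} {c : Unit} {i j : Fin n}

@[simp] theorem sStar_adj_center_left : (SStar n).Adj (.inl c) (.inr (.inl i)) := by simp [SStar]
@[simp] theorem sStar_adj_left_center : (SStar n).Adj (.inr (.inl i)) (.inl c) := by simp [SStar]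
@[simp] theorem sStar_adj_left_right : (SStar n).Adj (.inr (.inl i)) (.inr (.inr j)) ↔ i = j := by
  simp [SStar, eq_comm]
@[simp] theorem sStar_adj_right_left : (SStar n).Adj (.inr (.inr i)) (.inr (.inl j)) ↔ i = j := by
  simp [SStar, eq_comm]
@[simp] theorem not_sStar_adj_center_right : ¬(SStar n).Adj (.inl c) (.inr (.inr i)) := by
  simp [SStar]
@[simp] theorem not_sStar_adj_right_center : ¬(SStar n).Adj (.inr (.inr i)) (.inl c) := by
  simp [SStar]
@[simp] theorem not_sStar_adj_left_left : ¬(SStar n).Adj (.inr (.inl i)) (.inr (.inl j)) := by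
  simp [SStar]
@[simp] theorem not_sStar_adj_right_right : ¬(SStar n).Adj (.inr (.inr i)) (.inr (.inr j)) := by
  simp [SStar]

theorem sStar_isIndContained_of {u : V} {y z : Fin n → V} (huy : ∀ i, G.Adj u (y i))
    (huz : ∀ i, ¬G.Adj u (z i)) (hzu : ∀ i, z i ≠ u) (hyz : ∀ i j, G.Adj (y i) (z j) ↔ i = j)
    (hyy : ∀ i j, ¬G.Adj (y i) (y j)) (hzz : ∀ i j, ¬G.Adj (z i) (z j)) : SStar n ⊴ G := by
  have hy : y.Injective := fun i j h => ((hyz j i).mp (h ▸ (hyz i i).mpr rfl)).symm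
  have hz : z.Injective := fun i j h => (hyz i j).mp (h ▸ (hyz i i).mpr rfl)
  have hyz' : ∀ i j, y i ≠ z j := fun i j h => huz j (h ▸ huy i)
  have hinj : (Sum.elim (fun _ : Unit => u) (Sum.elim y z)).Injective :=
    (Function.injective_of_subsingleton _).sumElim (hy.sumElim hz hyz') <| by
      rintro ⟨⟩ (i | i)
      exacts [(huy i).ne, (hzu i).symm]
  refine ⟨⟨⟨_, hinj⟩, fun {a b} => ?_⟩⟩
  rcases a with ⟨⟩ | i | i <;> rcases b with ⟨⟩ | j | j <;>
    simp [huy, huz, hyz, hyy, hzz, G.adj_comm (z _) (y _), G.adj_comm (y _) u,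
      G.adj_comm (z _) u, eq_comm]

theorem sStar_isIndContained_sStar {a : ℕ} (h : a ≤ n) : SStar a ⊴ SStar n :=
  sStar_isIndContained_of (u := .inl ()) (y := fun i => .inr (.inl (Fin.castLE h i)))
    (z := fun i => .inr (.inr (Fin.castLE h i))) (by simp) (by simp) (by simp)
    (by simp [Fin.castLE_inj]) (by simp) (by simp)

theorem sStar_connected : (SStar n).Connected := by
  have hx : ∀ a, (SStar n).Reachable (.inl ()) a := by
    rintro (⟨⟩ | i | i)
    · rfl
    · exact sStar_adj_center_left.reachable
    · exact sStar_adj_center_left.reachable.trans (sStar_adj_left_right.mpr rfl).reachable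
  exact ⟨fun a b => (hx a).symm.trans (hx b)⟩

end SStar

theorem isInducedStarSet_or_isSingletonSet_iff {S : Set V} (hS : S.Finite) :
    IsInducedStarSet G S ∨ IsSingletonSet S ↔
      ∃ c ∈ S, ∀ x ∈ S, ∀ y ∈ S, x ≠ y → (G.Adj x y ↔ x = c ∨ y = c) := by
  constructor
  · rintro (⟨m, -, ⟨φ⟩⟩ | ⟨c, rfl⟩)
    · refine ⟨φ.symm (.inl ()), Subtype.property _, fun x hx y hy hxy => ?_⟩
      have hcenter : ∀ a : S, a.1 = (φ.symm (.inl ())).1 ↔ φ a = .inl () := fun a => by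
        rw [← Subtype.ext_iff, φ.eq_symm_apply]
      have hne : (⟨x, hx⟩ : S) ≠ ⟨y, hy⟩ := fun h => hxy (congrArg Subtype.val h)
      rw [show G.Adj x y ↔ (G.induce S).Adj ⟨x, hx⟩ ⟨y, hy⟩ from Iff.rfl, ← φ.map_adj_iff,
        hcenter ⟨x, hx⟩, hcenter ⟨y, hy⟩]
      have := φ.injective.ne hne
      rcases hφx : φ ⟨x, hx⟩ with ⟨⟩ | i <;> rcases hφy : φ ⟨y, hy⟩ with ⟨⟩ | j <;>
        simp_all [_root_.starGraph]
    · exact ⟨c, rfl, fun x hx y hy hxy => absurd (hx.trans hy.symm) hxy⟩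
  · rintro ⟨c, hc, hadj⟩
    classical
    by_cases hleaf : ∃ x ∈ S, x ≠ c
    · obtain ⟨x, hx, hxc⟩ := hleaf
      have : Fintype S := hS.fintype
      let e : S ≃ Unit ⊕ Fin (Fintype.card {a : S // a.1 ≠ c}) :=
        (Equiv.sumCompl (fun a : S => a.1 = c)).symm.trans <| Equiv.sumCongr
          ⟨fun _ => (), fun _ => ⟨⟨c, hc⟩, rfl⟩, fun a => Subtype.ext (Subtype.ext a.2.symm),
            fun _ => rfl⟩ (Fintype.equivFin _)
      refine Or.inl ⟨_, Fintype.card_pos_iff.mpr ⟨⟨⟨x, hx⟩, hxc⟩⟩, ⟨⟨e, fun {a b} => ?_⟩⟩⟩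
      by_cases ha : a.1 = c <;> by_cases hb : b.1 = c <;>
        simp [e, Equiv.sumCompl_symm_apply_of_pos, Equiv.sumCompl_symm_apply_of_neg, ha, hb,
          _root_.starGraph]
      · exact (hadj c hc b b.2 (Ne.symm hb)).mpr (.inl rfl)
      · exact (hadj a a.2 c hc ha).mpr (.inr rfl)
      · exact fun h => ((hadj a a.2 b b.2 h.ne).mp h).elim ha hb
    · push Not at hleaf
      exact Or.inr ⟨c, Set.eq_singleton_iff_unique_mem.mpr ⟨hc, hleaf⟩⟩

theorem insc_le_card {P : Finset (Set V)}
    (hP : IsCoverBy P fun S => IsInducedStarSet G S ∨ IsSingletonSet S) : insc G ≤ #P :=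
  Nat.sInf_le ⟨P, rfl, hP⟩

theorem exists_isCoverBy_card_eq_insc [Finite V] : ∃ P : Finset (Set V), #P = insc G ∧
    IsCoverBy P fun S => IsInducedStarSet G S ∨ IsSingletonSet S := by
  classical
  have := Fintype.ofFinite V
  have hsingletons : IsCoverBy (univ.image ({·})) fun S : Set V =>
      IsInducedStarSet G S ∨ IsSingletonSet S :=
    ⟨by simpa using fun v => Or.inr ⟨v, rfl⟩, fun v => ⟨{v}, by simp, rfl⟩⟩
  exact Nat.sInf_mem (s := {k | ∃ P : Finset (Set V), #P = k ∧
    IsCoverBy P fun S => IsInducedStarSet G S ∨ IsSingletonSet S}) ⟨_, _, rfl, hsingletons⟩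

theorem ncard_le_insc_mul [Finite V] {A : Set V} {b : ℕ}
    (hb : ∀ S, IsInducedStarSet G S ∨ IsSingletonSet S → (S ∩ A).ncard ≤ b) :
    A.ncard ≤ insc G * b := by
  obtain ⟨P, hPcard, hPstar, hPcov⟩ := exists_isCoverBy_card_eq_insc (G := G)
  calc A.ncard ≤ (⋃ S ∈ P, S ∩ A).ncard := Set.ncard_le_ncard fun v hv => by
        obtain ⟨S, hS, hvS⟩ := hPcov v
        exact Set.mem_biUnion hS ⟨hvS, hv⟩
    _ ≤ ∑ S ∈ P, (S ∩ A).ncard := P.set_ncard_biUnion_le _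
    _ ≤ ∑ _S ∈ P, b := sum_le_sum fun S hS => hb S (hPstar S hS)
    _ = insc G * b := by simp [hPcard]

theorem lt_insc_completeGraph (c : ℕ) : c < insc (completeGraph (Fin (2 * c + 2))) := by
  suffices (Set.univ : Set (Fin (2 * c + 2))).ncard ≤
      insc (completeGraph (Fin (2 * c + 2))) * 2 by
    simp only [Set.ncard_univ, Nat.card_eq_fintype_card, Fintype.card_fin] at this; omega
  refine ncard_le_insc_mul fun S hS => ?_
  obtain ⟨c₀, -, hadj⟩ := (isInducedStarSet_or_isSingletonSet_iff S.toFinite).mp hS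
  have : (S \ {c₀}).ncard ≤ 1 := (Set.ncard_le_one).mpr fun x hx y hy => by
    by_contra hxy
    rw [Set.mem_sdiff_singleton] at hx hy
    simpa [hxy, hx.2, hy.2] using hadj x hx.1 y hy.1 hxy
  have := S.pred_ncard_le_ncard_sdiff_singleton c₀
  rw [Set.inter_univ]; omega

theorem lt_insc_pathGraph (c : ℕ) : c < insc (pathGraph (3 * c + 3)) := by
  suffices (Set.univ : Set (Fin (3 * c + 3))).ncard ≤ insc (pathGraph (3 * c + 3)) * 3 by
    simp only [Set.ncard_univ, Nat.card_eq_fintype_card, Fintype.card_fin] at this; omega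
  refine ncard_le_insc_mul fun S hS => ?_
  obtain ⟨c₀, hc₀, hadj⟩ := (isInducedStarSet_or_isSingletonSet_iff S.toFinite).mp hS
  have : (S \ {c₀}).ncard ≤ 2 := by
    by_contra! h
    obtain ⟨x, y, z, hx, hy, hz, hxy, hxz, hyz⟩ := (Set.two_lt_ncard_iff).mp h
    have hcx := (hadj c₀ hc₀ x hx.1 (Ne.symm hx.2)).mpr (.inl rfl)
    have hcy := (hadj c₀ hc₀ y hy.1 (Ne.symm hy.2)).mpr (.inl rfl)
    have hcz := (hadj c₀ hc₀ z hz.1 (Ne.symm hz.2)).mpr (.inl rfl)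
    simp only [pathGraph_adj] at hcx hcy hcz
    omega
  have := S.pred_ncard_le_ncard_sdiff_singleton c₀
  rw [Set.inter_univ]; omega

theorem lt_insc_sStar (c : ℕ) : c < insc (SStar (c + 1)) := by
  suffices (Set.range fun i : Fin (c + 1) =>
      (.inr (.inr i) : Unit ⊕ Fin (c + 1) ⊕ Fin (c + 1))).ncard ≤ insc (SStar (c + 1)) * 1 by
    rw [Set.ncard_range_of_injective (fun i j h => by simpa using h), Nat.card_eq_fintype_card,
      Fintype.card_fin] at this
    omega
  refine ncard_le_insc_mul fun S hS => (Set.ncard_le_one).mpr ?_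
  obtain ⟨c₀, hc₀, hadj⟩ := (isInducedStarSet_or_isSingletonSet_iff S.toFinite).mp hS
  rintro _ ⟨hi, i, rfl⟩ _ ⟨hj, j, rfl⟩
  by_contra hij
  have hleaves := (hadj _ hi _ hj hij).not.mp (by simp)
  push Not at hleaves
  have hci := (hadj c₀ hc₀ _ hi (Ne.symm hleaves.1)).mpr (.inl rfl)
  have hcj := (hadj c₀ hc₀ _ hj (Ne.symm hleaves.2)).mpr (.inl rfl)
  rcases c₀ with _ | k | k
  · simp at hci
  · simp only [sStar_adj_left_right] at hci hcj
    exact hij (by rw [← hci, ← hcj])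
  · simp at hci

theorem exists_ramsey_bound (a b : ℕ) : ∃ N, ∀ {V : Type} (G : SimpleGraph V) (s : Finset V),
    N ≤ #s → (∃ t ⊆ s, G.IsNClique a t) ∨ ∃ t ⊆ s, Gᶜ.IsNClique b t := by
  classical
  induction a generalizing b with
  | zero => exact ⟨0, fun _ _ _ => .inl ⟨∅, empty_subset _, isNClique_zero.mpr rfl⟩⟩
  | succ a iha =>
    induction b with
    | zero => exact ⟨0, fun _ _ _ => .inr ⟨∅, empty_subset _, isNClique_zero.mpr rfl⟩⟩
    | succ b ihb =>
      obtain ⟨N₁, h₁⟩ := iha (b + 1)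
      obtain ⟨N₂, h₂⟩ := ihb
      refine ⟨N₁ + N₂ + 1, fun {V} G s hs => ?_⟩
      obtain ⟨x, hx⟩ : s.Nonempty := card_pos.mp (by omega)
      have grow : ∀ (H : SimpleGraph V) {k t}, H.IsNClique k t → t ⊆ s.erase x →
          (∀ y ∈ t, H.Adj x y) → ∃ t' ⊆ s, H.IsNClique (k + 1) t' := fun H k t ht hts hxt =>
        ⟨insert x t, insert_subset hx (hts.trans (erase_subset x s)), ht.insert hxt⟩
      set A := (s.erase x).filter (G.Adj x)
      set B := (s.erase x).filter (¬G.Adj x ·)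
      have hAB : #A + #B = #s - 1 := by
        rw [card_filter_add_card_filter_not, card_erase_of_mem hx]
      by_cases hA : N₁ ≤ #A
      · obtain ⟨t, htA, ht⟩ | ⟨t, htA, ht⟩ := h₁ G A hA
        · exact .inl (grow G ht (htA.trans (filter_subset _ _))
            fun y hy => (mem_filter.mp (htA hy)).2)
        · exact .inr ⟨t, htA.trans ((filter_subset _ _).trans (erase_subset x s)), ht⟩
      · obtain ⟨t, htB, ht⟩ | ⟨t, htB, ht⟩ := h₂ G B (by omega)
        · exact .inl ⟨t, htB.trans ((filter_subset _ _).trans (erase_subset x s)), ht⟩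
        · refine .inr (grow Gᶜ ht (htB.trans (filter_subset _ _)) fun y hy => ?_)
          obtain ⟨hyx, hxy⟩ := mem_filter.mp (htB hy)
          exact (compl_adj G x y).mpr ⟨(ne_of_mem_erase hyx).symm, hxy⟩

theorem IsNClique.image_of_comap [DecidableEq W] {f : V → W} {k : ℕ}
    {t : Finset V} (h : (H.comap f).IsNClique k t) : H.IsNClique k (t.image f) := by
  have hne : ∀ x ∈ t, ∀ y ∈ t, x ≠ y → H.Adj (f x) (f y) := fun x hx y hy => h.isClique hx hy
  refine ⟨?_, ?_⟩
  · rw [coe_image]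
    rintro _ ⟨x, hx, rfl⟩ _ ⟨y, hy, rfl⟩ hxy
    exact hne x hx y hy fun e => hxy (e ▸ rfl)
  · rw [card_image_of_injOn fun x hx y hy e => by_contra fun hxy => (hne x hx y hy hxy).ne e,
      h.card_eq]

theorem exists_card_lt_of_privateNeighbors (m n : ℕ) : ∃ B, ∀ {V : Type} (G : SimpleGraph V),
    G.CliqueFree m → ¬SStar n ⊴ G → ∀ (u : V) (T : Finset V) (p : V → V),
      (∀ x ∈ T, G.Adj u x) → (∀ x ∈ T, p x ≠ u ∧ ¬G.Adj u (p x)) →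
      (∀ x ∈ T, ∀ y ∈ T, G.Adj y (p x) ↔ y = x) → #T < B := by
  classical
  rcases m with _ | m
  · exact ⟨0, fun G hK => absurd hK not_cliqueFree_zero⟩
  obtain ⟨N₂, hN₂⟩ := exists_ramsey_bound (m + 1) n
  obtain ⟨N₁, hN₁⟩ := exists_ramsey_bound m N₂
  refine ⟨N₁, fun {V} G hK hS u T p hTu hpu hp => ?_⟩
  by_contra! hT
  obtain ⟨t, htT, ht⟩ | ⟨T₁, hT₁T, hT₁⟩ := hN₁ G T hT
  · exact hK _ (ht.insert fun y hy => hTu y (htT hy))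
  obtain ⟨t, htT₁, ht⟩ | ⟨Y, hYT₁, hY⟩ := hN₂ (G.comap p) T₁ hT₁.card_eq.ge
  · exact hK _ ht.image_of_comap
  have hYT : Y ⊆ T := hYT₁.trans hT₁T
  let e := Y.equivFinOfCardEq hY.card_eq
  have hy (i : Fin n) : ((e.symm i : Y) : V) ∈ T := hYT (e.symm i).2
  refine hS (sStar_isIndContained_of (u := u) (y := fun i => e.symm i)
    (z := fun i => p (e.symm i)) (fun i => hTu _ (hy i)) (fun i => (hpu _ (hy i)).2)
    (fun i => (hpu _ (hy i)).1) (fun i j => ?_) (fun i j => ?_) (fun i j => ?_))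
  · rw [hp _ (hy j) _ (hy i), ← Subtype.ext_iff, e.symm.apply_eq_iff_eq]
  · by_cases hij : i = j
    · simp [hij]
    · exact ((compl_adj G _ _).mp (hT₁.isClique (hYT₁ (e.symm i).2) (hYT₁ (e.symm j).2)
        (by simpa [Subtype.ext_iff] using hij))).2
  · by_cases hij : i = j
    · simp [hij]
    · exact ((compl_adj _ _ _).mp (hY.isClique (e.symm i).2 (e.symm j).2
        (by simpa [Subtype.ext_iff] using hij))).2

theorem Walk.dist_getVert_of_length_eq_dist {u v : V} {q : G.Walk u v}
    (hq : q.length = G.dist u v) {i : ℕ} (hi : i ≤ q.length) : G.dist u (q.getVert i) = i := by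
  have h₁ : G.dist u (q.getVert i) ≤ i := by
    simpa [Walk.take_length, hi] using dist_le (q.take i)
  have h₂ : G.dist (q.getVert i) v ≤ q.length - i := by
    simpa [Walk.drop_length] using dist_le (q.drop i)
  have := (q.take i).reachable.dist_triangle_left v
  omega

theorem Reachable.dist_add_one_lt_of_not_isIndContained {u v : V} {p : ℕ}
    (huv : G.Reachable u v) (hP : ¬pathGraph p ⊴ G) : G.dist u v + 1 < p := by
  by_contra! hp
  obtain ⟨q, hq⟩ := huv.exists_walk_length_eq_dist
  have hdist (i : Fin p) : G.dist u (q.getVert i) = i :=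
    q.dist_getVert_of_length_eq_dist hq (by omega)
  refine hP ⟨⟨⟨fun i => q.getVert i, fun i j h => Fin.ext ?_⟩, fun {i j} => ?_⟩⟩
  · simpa [hdist] using congrArg (G.dist u) h
  · change G.Adj (q.getVert i) (q.getVert j) ↔ _
    rw [pathGraph_adj]
    refine ⟨fun h => ?_, ?_⟩
    · have hij : (i : ℕ) ≠ j := fun e => G.irrefl (by rwa [e] at h)
      have := h.diff_dist_adj (u := u)
      rw [hdist, hdist] at this
      omega
    · rintro (h | h)
      · simpa [← h] using q.adj_getVert_succ (i := i) (by omega)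
      · simpa [← h] using (q.adj_getVert_succ (i := j) (by omega)).symm

theorem exists_adj_adj_of_dist_eq_two {u v : V} (h : G.dist u v = 2) :
    ∃ w, G.Adj u w ∧ G.Adj w v := by
  have huv : G.Reachable u v := Reachable.of_dist_ne_zero (by omega)
  obtain ⟨-, -, w, hw⟩ := edist_eq_two_iff.mp (by rw [← huv.coe_dist_eq_edist, h]; rfl)
  exact ⟨w, hw.1, hw.2.symm⟩

theorem exists_dominating_dist_eq_two (m n : ℕ) : ∃ B, ∀ {V : Type} [Finite V]
    (G : SimpleGraph V), G.CliqueFree m → ¬SStar n ⊴ G → ∀ u : V,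
      ∃ D : Finset V, #D ≤ B ∧ ∀ z, G.dist u z = 2 → ∃ d ∈ D, G.Adj d z := by
  classical
  obtain ⟨B, hB⟩ := exists_card_lt_of_privateNeighbors m n
  refine ⟨B, fun {V} _ G hK hS u => ?_⟩
  have := Fintype.ofFinite V
  let Dominates (T : Finset V) : Prop := ∀ z, G.dist u z = 2 → ∃ d ∈ T, G.Adj d z
  have hN : Dominates (univ.filter (G.Adj u)) := fun z hz => by
    obtain ⟨w, huw, hwz⟩ := exists_adj_adj_of_dist_eq_two hz
    exact ⟨w, by simpa using huw, hwz⟩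
  obtain ⟨T, hT, hmin⟩ := exists_min_image ((univ.filter (G.Adj u)).powerset.filter Dominates)
    card ⟨_, mem_filter.mpr ⟨mem_powerset_self _, hN⟩⟩
  obtain ⟨hTN, hTdom⟩ := mem_filter.mp hT
  have hTu : ∀ x ∈ T, G.Adj u x := fun x hx => (mem_filter.mp (mem_powerset.mp hTN hx)).2
  -- by minimality, `T.erase x` fails to dominate: this yields a private neighbour of `x`
  have hpriv : ∀ x ∈ T, ∃ z, G.dist u z = 2 ∧ G.Adj x z ∧ ∀ y ∈ T, G.Adj y z → y = x := by
    intro x hx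
    by_contra! hnone
    have hdom : Dominates (T.erase x) := fun z hz => by
      obtain ⟨d, hd, hdz⟩ := hTdom z hz
      by_cases hdx : d = x
      · obtain ⟨y, hy, hyz, hyx⟩ := hnone z hz (hdx ▸ hdz)
        exact ⟨y, mem_erase.mpr ⟨hyx, hy⟩, hyz⟩
      · exact ⟨d, mem_erase.mpr ⟨hdx, hd⟩, hdz⟩
    have := hmin _ (mem_filter.mpr
      ⟨mem_powerset.mpr ((erase_subset x T).trans (mem_powerset.mp hTN)), hdom⟩)
    have := card_erase_of_mem hx
    have := card_pos.mpr ⟨x, hx⟩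
    omega
  choose! p hp using hpriv
  refine ⟨T, (hB G hK hS u T p hTu (fun x hx => ?_)
    fun x hx y hy => ⟨(hp x hx).2.2 y hy, fun e => e ▸ (hp x hx).2.1⟩).le, hTdom⟩
  have h2 := (hp x hx).1
  exact ⟨fun e => by simp [e] at h2, fun h => by simp [dist_eq_one_iff_adj.mpr h] at h2⟩

theorem exists_dominating_ball {B : ℕ} (hG : G.Connected)
    (h₂ : ∀ u, ∃ D : Finset V, #D ≤ B ∧ ∀ z, G.dist u z = 2 → ∃ d ∈ D, G.Adj d z) (r : V) :
    ∀ i, ∃ D : Finset V, #D ≤ (B + 1) ^ i ∧ ∀ v, G.dist r v ≤ i + 1 → ∃ d ∈ D, d = v ∨ G.Adj d v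
  | 0 => ⟨{r}, by simp, fun v hv => ⟨r, mem_singleton_self r, by
      rcases Nat.le_one_iff_eq_zero_or_eq_one.mp hv with h | h
      exacts [.inl (hG.dist_eq_zero_iff.mp h), .inr (dist_eq_one_iff_adj.mp h)]⟩⟩
  | i + 1 => by
    classical
    obtain ⟨D, hDcard, hD⟩ := exists_dominating_ball hG h₂ r i
    choose D₂ hD₂card hD₂ using h₂
    refine ⟨D ∪ D.biUnion D₂, ?_, fun v hv => ?_⟩
    · calc #(D ∪ D.biUnion D₂) ≤ #D + ∑ d ∈ D, #(D₂ d) := (card_union_le _ _).trans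
            (Nat.add_le_add_left card_biUnion_le _)
        _ ≤ #D + ∑ _d ∈ D, B := Nat.add_le_add_left (sum_le_sum fun d _ => hD₂card d) _
        _ = #D * (B + 1) := by rw [sum_const, smul_eq_mul]; ring
        _ ≤ (B + 1) ^ (i + 1) := by rw [pow_succ]; gcongr
    by_cases hvi : G.dist r v ≤ i + 1
    · obtain ⟨d, hd, hdv⟩ := hD v hvi
      exact ⟨d, mem_union_left _ hd, hdv⟩
    obtain ⟨q, hq⟩ := hG.exists_walk_length_eq_dist r v
    have hw : G.dist r (q.getVert (i + 1)) = i + 1 :=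
      q.dist_getVert_of_length_eq_dist hq (by omega)
    have hwv : G.Adj (q.getVert (i + 1)) v := by
      simpa [show i + 1 + 1 = q.length by omega] using q.adj_getVert_succ (i := i + 1) (by omega)
    obtain ⟨d, hd, rfl | hdw⟩ := hD _ hw.le
    · exact ⟨_, mem_union_left _ hd, .inr hwv⟩
    have hdv : G.dist d v ≤ 2 := by
      have := hdw.reachable.dist_triangle_left v
      rw [dist_eq_one_iff_adj.mpr hdw, dist_eq_one_iff_adj.mpr hwv] at this
      exact this
    rcases (by omega : G.dist d v = 0 ∨ G.dist d v = 1 ∨ G.dist d v = 2) with h | h | h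
    · exact ⟨d, mem_union_left _ hd, .inl (hG.dist_eq_zero_iff.mp h)⟩
    · exact ⟨d, mem_union_left _ hd, .inr (dist_eq_one_iff_adj.mp h)⟩
    · obtain ⟨d', hd', hd'v⟩ := hD₂ d v h
      exact ⟨d', mem_union_right _ (mem_biUnion.mpr ⟨d, hd, hd'⟩), .inr hd'v⟩

theorem exists_dominating_bound (m n p : ℕ) : ∃ Γ, ∀ {V : Type} [Finite V] (G : SimpleGraph V),
    G.Connected → G.CliqueFree m → ¬SStar n ⊴ G → ¬pathGraph p ⊴ G →
      ∃ D : Finset V, #D ≤ Γ ∧ ∀ v, ∃ d ∈ D, d = v ∨ G.Adj d v := by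
  obtain ⟨B, hB⟩ := exists_dominating_dist_eq_two m n
  refine ⟨(B + 1) ^ p, fun {V} _ G hG hK hS hP => ?_⟩
  obtain ⟨r⟩ := hG.nonempty
  obtain ⟨D, hDcard, hD⟩ := exists_dominating_ball hG (hB G hK hS) r p
  exact ⟨D, hDcard, fun v => hD v (by
    have := (hG r v).dist_add_one_lt_of_not_isIndContained hP
    omega)⟩

theorem colorable_of_dominating (D : Finset V)
    (hD : ∀ v, ∃ d ∈ D, d = v ∨ G.Adj d v) {X : ℕ}
    (hX : ∀ d, (G.induce (G.neighborSet d)).Colorable X) : G.Colorable (#D * (X + 1)) := by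
  classical
  choose f hfD hf using hD
  let C d := (hX d).some
  let col (d v : V) : Option (Fin X) := if h : G.Adj d v then some (C d ⟨v, h⟩) else none
  have hcol : ∀ {d v w}, G.Adj v w → d = v ∨ G.Adj d v → d = w ∨ G.Adj d w →
      col d v ≠ col d w := by
    rintro d v w hvw (rfl | hv) (rfl | hw)
    · exact (G.ne_of_adj hvw rfl).elim
    · simp [col, hw]
    · simp [col, hv]
    · simpa [col, hv, hw] using (C d).valid (by simpa using hvw)
  have := (Coloring.mk (fun v => ((⟨f v, hfD v⟩ : D), col (f v) v)) fun {v w} hvw h => by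
    simp only [Prod.mk.injEq, Subtype.mk.injEq] at h
    obtain ⟨hfw, hcvw⟩ := h
    rw [← hfw] at hcvw
    exact hcol hvw (hf v) (by rw [hfw]; exact hf w) hcvw).colorable
  simpa using this

theorem exists_colorable_bound (n p : ℕ) : ∀ w, ∃ X, ∀ {V : Type} [Finite V]
    (G : SimpleGraph V), G.CliqueFree w → ¬SStar n ⊴ G → ¬pathGraph p ⊴ G → G.Colorable X
  | 0 => ⟨0, fun _ hK => absurd hK not_cliqueFree_zero⟩
  | w + 1 => by
    obtain ⟨X, hX⟩ := exists_colorable_bound n p w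
    obtain ⟨Γ, hΓ⟩ := exists_dominating_bound (w + 1) n p
    refine ⟨Γ * (X + 1), fun {V} _ G hK hS hP =>
      colorable_iff_forall_connectedComponent.mpr fun c => ?_⟩
    have hc : c.toSimpleGraph ⊴ G := (Embedding.induce _).isIndContained
    obtain ⟨D, hDcard, hD⟩ := hΓ c.toSimpleGraph c.connected_toSimpleGraph
      (hK.comap hc.isContained) (fun h => hS (h.trans hc)) (fun h => hP (h.trans hc))
    refine (colorable_of_dominating D hD fun d => hX _ ?_ ?_ ?_).mono
      (Nat.mul_le_mul_right _ hDcard)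
    · rw [cliqueFree_induce_iff]
      simpa using CliqueFreeOn.of_succ _ (hK.comap hc.isContained).cliqueFreeOn (Set.mem_univ d)
    · exact fun h => hS (h.trans ((Embedding.induce _).isIndContained.trans hc))
    · exact fun h => hP (h.trans ((Embedding.induce _).isIndContained.trans hc))

theorem insc_le_of_dominating_of_colorable [Finite V] (D : Finset V)
    (hD : ∀ v, ∃ d ∈ D, d = v ∨ G.Adj d v) {X : ℕ} (hX : G.Colorable X) : insc G ≤ #D * X := by
  classical
  let C := hX.some
  let star (d : V) (j : Fin X) : Set V := insert d {x | G.Adj d x ∧ C x = j}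
  have hstar d j : IsInducedStarSet G (star d j) ∨ IsSingletonSet (star d j) := by
    refine (isInducedStarSet_or_isSingletonSet_iff (Set.toFinite _)).mpr
      ⟨d, Set.mem_insert _ _, ?_⟩
    rintro x (rfl | ⟨hx, hxj⟩) y (rfl | ⟨hy, hyj⟩) hxy
    · exact (hxy rfl).elim
    · simpa using hy
    · simpa using hx.symm
    · refine iff_of_false (fun h => C.valid h (hxj.trans hyj.symm)) ?_
      rintro (rfl | rfl)
      exacts [G.irrefl hx, G.irrefl hy]
  refine (insc_le_card (P := (D ×ˢ univ).image fun q => star q.1 q.2)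
    ⟨?_, fun v => ?_⟩).trans ?_
  · simp only [mem_image, mem_product, mem_univ, and_true, Prod.exists]
    rintro _ ⟨d, j, -, rfl⟩
    exact hstar d j
  · obtain ⟨d, hd, hdv⟩ := hD v
    refine ⟨star d (C v), mem_image.mpr ⟨(d, C v), by simp [hd], rfl⟩, ?_⟩
    rcases hdv with rfl | hdv
    exacts [Set.mem_insert _ _, Set.mem_insert_of_mem _ ⟨hdv, rfl⟩]
  · exact card_image_le.trans (by simp)

theorem exists_insc_bound (m n p : ℕ) : ∃ c, ∀ {V : Type} [Finite V] (G : SimpleGraph V),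
    G.Connected → G.CliqueFree m → ¬SStar n ⊴ G → ¬pathGraph p ⊴ G → insc G ≤ c := by
  obtain ⟨Γ, hΓ⟩ := exists_dominating_bound m n p
  obtain ⟨X, hX⟩ := exists_colorable_bound n p m
  refine ⟨Γ * X, fun G hG hK hS hP => ?_⟩
  obtain ⟨D, hDcard, hD⟩ := hΓ G hG hK hS hP
  exact (insc_le_of_dominating_of_colorable D hD (hX G hK hS hP)).trans
    (Nat.mul_le_mul_right _ hDcard)

end SimpleGraph

theorem statement_11_general (N : ℕ) (k : Fin N → ℕ) (ℋ : ∀ i : Fin N, SimpleGraph (Fin (k i))) :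
    (∃ c : ℕ, ∀ (V : Type) [Fintype V] (G : SimpleGraph V),
        G.Connected → (∀ i, ¬ HasInducedCopy G (ℋ i)) → insc G ≤ c) ↔
      ∃ n : ℕ, 4 ≤ n ∧
        (∃ i, HasInducedCopy (completeGraph (Fin n)) (ℋ i)) ∧
        (∃ i, HasInducedCopy (SStar n) (ℋ i)) ∧
        (∃ i, HasInducedCopy (pathGraph n) (ℋ i)) := by
  simp only [hasInducedCopy_iff_isIndContained]
  constructor
  · rintro ⟨c, hc⟩
    have hit {W : Type} [Fintype W] {F : SimpleGraph W} (hF : F.Connected) (hlt : c < insc F) :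
        ∃ i, ℋ i ⊴ F := by
      by_contra! h
      exact (hc W F hF h).not_gt hlt
    obtain ⟨iK, hK⟩ := hit connected_top (lt_insc_completeGraph c)
    obtain ⟨iS, hS⟩ := hit sStar_connected (lt_insc_sStar c)
    obtain ⟨iP, hP⟩ := hit (pathGraph_connected _) (lt_insc_pathGraph c)
    exact ⟨3 * c + 4, by omega,
      ⟨iK, hK.trans (completeGraph_isIndContained_completeGraph (by omega))⟩,
      ⟨iS, hS.trans (sStar_isIndContained_sStar (by omega))⟩,
      ⟨iP, hP.trans (pathGraph_isIndContained_pathGraph (by omega))⟩⟩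
  · rintro ⟨n, -, ⟨iK, hK⟩, ⟨iS, hS⟩, ⟨iP, hP⟩⟩
    obtain ⟨c, hc⟩ := exists_insc_bound n n n
    exact ⟨c, fun V _ G hG hfree => hc G hG
      (cliqueFree_iff_not_isIndContained.mpr fun h => hfree iK (hK.trans h))
      (fun h => hfree iS (hS.trans h)) (fun h => hfree iP (hP.trans h))⟩

theorem statement_11 (N : ℕ) (k : Fin N → ℕ) (ℋ : ∀ i : Fin N, SimpleGraph (Fin (k i)))
    (hconn : ∀ i, (ℋ i).Connected) :
    (∃ c : ℕ, ∀ (V : Type) [Fintype V] (G : SimpleGraph V),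
        G.Connected → (∀ i, ¬ HasInducedCopy G (ℋ i)) → insc G ≤ c) ↔
      ∃ n : ℕ, 4 ≤ n ∧
        (∃ i, HasInducedCopy (completeGraph (Fin n)) (ℋ i)) ∧
        (∃ i, HasInducedCopy (SStar n) (ℋ i)) ∧
        (∃ i, HasInducedCopy (pathGraph n) (ℋ i)) :=
  statement_11_general N k ℋ
end

section
/- Let ℋ be a finite family of connected finite simple graphs. Then ℋ satisfies (P-insp) if and only if there exists an integer n ≥ 4 such that ℋ ≤ {K_n, S*_n, S̃_n, P_n}. -/
open SimpleGraph

/-!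
Lower bounds. A star has no triangle and lies in the closed neighbourhood of its centre. So a
part of `K_n` has at most two vertices, a part of `P_n` at most three, no part of `S*_n` contains
two of the leaves `zᵢ`, and in `S̃_n` the part of the centre misses a vertex of every edge `yᵢzᵢ`,
whose own part then lies inside `{yᵢ, zᵢ}`. Hence if `ℋ` satisfies (P-insp) with constant `c`,
each of the four graphs with `n = 3c + 4` contains a member of `ℋ`.

Upper bound, for `G` connected and free of `K_n`, `S*_n`, `S̃_n` and `P_n`. If an independent
set `I` of neighbours of `c` dominates a set `W ∌ c`, then at most `2·4ⁿ` vertices of `I`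
dominate `W`: in a minimal dominating subset every `u` has a private neighbour `q u ∈ W`; among
`4ⁿ` of them with the same adjacency to `c`, Ramsey's theorem finds `n` pairwise nonadjacent
ones, and these with their `u` and `c` induce `S*_n` or `S̃_n`. Taking `I` maximal independent in
`N(c)` splits `N[c]` into a star centred at `c` and at most `2·4ⁿ` cones `{u} ∪ Dᵤ`, the vertices
of `Dᵤ` being adjacent to `u`, to `c` and to the earlier apexes; since the apexes form a clique,
the recursion into the cones stops after `n` levels. So each `N[x]` has a star partition of
bounded size, and by the domination fact again the ball of radius two around `x` is dominated
by boundedly many vertices. As `P_n`-freeness bounds the diameter, `G` has a bounded dominating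
set `X`, and distributing the vertices among the closed neighbourhoods of the vertices of `X`
gives the bound.
-/

open Finset

section InducedCopies

variable {V W U : Type*} {G : SimpleGraph V}

theorem HasInducedCopy.trans {H : SimpleGraph W} {K : SimpleGraph U}
    (hGH : HasInducedCopy G H) (hHK : HasInducedCopy H K) : HasInducedCopy G K := by
  obtain ⟨f, hf⟩ := hGH
  obtain ⟨g, hg⟩ := hHK
  exact ⟨g.trans f, fun a b => (hf (g a) (g b)).trans (hg a b)⟩

theorem cliqueFree_of_not_hasInducedCopy {n : ℕ}
    (h : ¬ HasInducedCopy G (completeGraph (Fin n))) : G.CliqueFree n := by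
  by_contra hK
  exact h ⟨(topEmbeddingOfNotCliqueFree hK).toEmbedding,
    fun _ _ => (topEmbeddingOfNotCliqueFree hK).map_adj_iff⟩

end InducedCopies

/-! ### Star partitions -/

section Stars

variable {V : Type*} {G : SimpleGraph V}

structure IsStarCenter (G : SimpleGraph V) (S : Set V) (c : V) : Prop where
  mem : c ∈ S
  adj : ∀ v ∈ S, v ≠ c → G.Adj c v
  not_adj : ∀ u ∈ S, ∀ v ∈ S, u ≠ c → v ≠ c → ¬ G.Adj u v

theorem exists_isStarCenter {S : Set V} (h : IsInducedStarSet G S ∨ IsSingletonSet S) :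
    ∃ c, IsStarCenter G S c := by
  rcases h with ⟨m, -, ⟨e⟩⟩ | ⟨v, rfl⟩
  · have hleaf : ∀ x : S, x ≠ e.symm (Sum.inl ()) → ∃ j, e x = Sum.inr j := by
      intro x hx
      rcases hex : e x with ⟨⟩ | j
      · exact absurd (e.symm_apply_eq.mpr hex.symm).symm hx
      · exact ⟨j, rfl⟩
    refine ⟨e.symm (Sum.inl ()), (e.symm _).2, fun v hv hvc => ?_, fun u hu v hv huc hvc => ?_⟩
    · obtain ⟨j, hj⟩ := hleaf ⟨v, hv⟩ fun h => hvc (congrArg Subtype.val h)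
      have : (_root_.starGraph m).Adj (e (e.symm (Sum.inl ()))) (e ⟨v, hv⟩) := by
        rw [e.apply_symm_apply, hj]
        simp [_root_.starGraph]
      exact e.map_adj_iff.mp this
    · intro huv
      obtain ⟨i, hi⟩ := hleaf ⟨u, hu⟩ fun h => huc (congrArg Subtype.val h)
      obtain ⟨j, hj⟩ := hleaf ⟨v, hv⟩ fun h => hvc (congrArg Subtype.val h)
      have := e.map_adj_iff.mpr (show (G.induce S).Adj ⟨u, hu⟩ ⟨v, hv⟩ from huv)
      rw [hi, hj] at this
      simp [_root_.starGraph] at this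
  · exact ⟨v, rfl, by simp_all, by simp_all⟩

theorem IsStarCenter.isInducedStarSet_or_isSingletonSet [Finite V] {S : Set V} {c : V}
    (h : IsStarCenter G S c) : IsInducedStarSet G S ∨ IsSingletonSet S := by
  classical
  have : Fintype S := Fintype.ofFinite S
  by_cases hS : S = {c}
  · exact Or.inr ⟨c, hS⟩
  left
  obtain ⟨v, hv, hvc⟩ : ∃ v ∈ S, v ≠ c := by
    by_contra! hall
    exact hS (Set.eq_singleton_iff_unique_mem.mpr ⟨h.mem, hall⟩)
  let e : S ≃ Unit ⊕ Fin (Fintype.card {x : S // ¬ x.1 = c}) :=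
    (Equiv.sumCompl (fun x : S => x.1 = c)).symm.trans
      (Equiv.sumCongr ⟨fun _ => (), fun _ => ⟨⟨c, h.mem⟩, rfl⟩,
        fun x => Subtype.ext (Subtype.ext x.2.symm), fun _ => rfl⟩ (Fintype.equivFin _))
  have he : ∀ x : S, (e x).isLeft ↔ x.1 = c := by
    intro x
    by_cases hx : x.1 = c <;> simp [e, hx]
  refine ⟨_, Fintype.card_pos_iff.mpr ⟨⟨⟨v, hv⟩, hvc⟩⟩, ⟨⟨e, fun {a b} => ?_⟩⟩⟩
  simp only [_root_.starGraph, completeBipartiteGraph_adj, ← Sum.not_isLeft, he, comap_adj,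
    Function.Embedding.coe_subtype]
  by_cases ha : a.1 = c <;> by_cases hb : b.1 = c
  · simp [ha, hb]
  · simpa [ha, hb] using h.adj b b.2 hb
  · simpa [ha, hb] using (h.adj a a.2 ha).symm
  · simpa [ha, hb] using h.not_adj a a.2 b b.2 ha hb

theorem IsStarCenter.not_triangle {S : Set V} {c a b d : V} (h : IsStarCenter G S c)
    (ha : a ∈ S) (hb : b ∈ S) (hd : d ∈ S) : ¬ (G.Adj a b ∧ G.Adj a d ∧ G.Adj b d) := by
  rintro ⟨hab, had, hbd⟩
  by_cases hac : a = c
  · subst hac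
    exact h.not_adj b hb d hd hab.ne.symm had.ne.symm hbd
  by_cases hbc : b = c
  · subst hbc
    exact h.not_adj a ha d hd hac hbd.ne.symm had
  exact h.not_adj a ha b hb hac hbc hab

end Stars

section StarPartitions

variable {V : Type*} {G : SimpleGraph V}

/-- The partition of `A` into the fibres of `σ`, each fibre being a star centred at the common
value of `σ` on it. -/
def IsStarPartition (G : SimpleGraph V) (A : Finset V) (σ : V → V) : Prop :=
  ∀ v ∈ A, IsStarCenter G {u | u ∈ A ∧ σ u = σ v} (σ v)

namespace IsStarPartition

variable {A : Finset V} {σ : V → V}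

theorem apply_apply (h : IsStarPartition G A σ) {v : V} (hv : v ∈ A) : σ (σ v) = σ v :=
  (h v hv).mem.2

theorem adj (h : IsStarPartition G A σ) {v : V} (hv : v ∈ A) (hσv : σ v ≠ v) :
    G.Adj (σ v) v :=
  (h v hv).adj v ⟨hv, rfl⟩ (Ne.symm hσv)

theorem not_adj (h : IsStarPartition G A σ) {u v : V} (hu : u ∈ A) (hv : v ∈ A)
    (huv : σ u = σ v) (hσu : σ u ≠ u) (hσv : σ v ≠ v) : ¬ G.Adj u v :=
  (h v hv).not_adj u ⟨hu, huv⟩ v ⟨hv, rfl⟩ (huv ▸ Ne.symm hσu) (Ne.symm hσv)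

end IsStarPartition

variable [DecidableEq V]

def HasStarPartition (G : SimpleGraph V) (A : Finset V) (k : ℕ) : Prop :=
  ∃ σ, IsStarPartition G A σ ∧ (A.image σ).card ≤ k

theorem HasStarPartition.mono {A : Finset V} {k l : ℕ} (h : HasStarPartition G A k)
    (hkl : k ≤ l) : HasStarPartition G A l :=
  let ⟨σ, hσ, hcard⟩ := h
  ⟨σ, hσ, hcard.trans hkl⟩

theorem IsStarCenter.hasStarPartition {A : Finset V} {c : V} (h : IsStarCenter G A c) :
    HasStarPartition G A 1 := by
  refine ⟨fun _ => c, fun v _ => ?_, card_le_one.mpr fun a ha b hb => ?_⟩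
  · simpa using h
  · obtain ⟨-, -, rfl⟩ := mem_image.mp ha
    obtain ⟨-, -, rfl⟩ := mem_image.mp hb
    rfl

theorem hasStarPartition_empty (k : ℕ) : HasStarPartition G ∅ k :=
  ⟨id, by simp [IsStarPartition], by simp⟩

theorem hasStarPartition_of_fibers {ι : Type*} [DecidableEq ι] {A : Finset V} {k : ℕ}
    (β : V → ι) (Z : Finset ι) (hβ : ∀ v ∈ A, β v ∈ Z)
    (h : ∀ i ∈ Z, HasStarPartition G (A.filter (β · = i)) k) :
    HasStarPartition G A (Z.card * k) := by
  have h' : ∀ i, HasStarPartition G (A.filter (β · = i)) k := by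
    intro i
    by_cases hi : i ∈ Z
    · exact h i hi
    · rw [filter_false_of_mem fun v hv (hvi : β v = i) => hi (hvi ▸ hβ v hv)]
      exact hasStarPartition_empty k
  choose σ hσ hcard using h'
  have hβσ : ∀ v ∈ A, β (σ (β v) v) = β v := fun v hv =>
    (mem_filter.mp ((hσ (β v) v (mem_filter.mpr ⟨hv, rfl⟩)).mem.1)).2
  refine ⟨fun v => σ (β v) v, fun v hv => ?_, ?_⟩
  · have hblock : {u | u ∈ A ∧ σ (β u) u = σ (β v) v} =
        {u | u ∈ A.filter (β · = β v) ∧ σ (β v) u = σ (β v) v} := by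
      ext u
      simp only [Set.mem_ofPred_eq, mem_filter]
      constructor
      · rintro ⟨hu, huv⟩
        have hβu : β u = β v := by rw [← hβσ u hu, huv, hβσ v hv]
        exact ⟨⟨hu, hβu⟩, hβu ▸ huv⟩
      · rintro ⟨⟨hu, hβu⟩, huv⟩
        exact ⟨hu, hβu ▸ huv⟩
    rw [hblock]
    exact hσ (β v) v (mem_filter.mpr ⟨hv, rfl⟩)
  · calc (A.image fun v => σ (β v) v).card
        ≤ (Z.biUnion fun i => (A.filter (β · = i)).image (σ i)).card := by
          refine card_le_card fun w hw => ?_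
          obtain ⟨v, hv, rfl⟩ := mem_image.mp hw
          exact mem_biUnion.mpr ⟨β v, hβ v hv, mem_image.mpr ⟨v, mem_filter.mpr ⟨hv, rfl⟩, rfl⟩⟩
      _ ≤ ∑ i ∈ Z, ((A.filter (β · = i)).image (σ i)).card := card_biUnion_le
      _ ≤ Z.card * k := sum_le_card_nsmul _ _ _ fun i _ => hcard i

variable [Fintype V]

theorem HasStarPartition.exists_isPartitionBy {k : ℕ} (h : HasStarPartition G univ k) :
    ∃ P : Finset (Set V), P.card ≤ k ∧
      IsPartitionBy P (fun S => IsInducedStarSet G S ∨ IsSingletonSet S) := by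
  classical
  obtain ⟨σ, hσ, hcard⟩ := h
  refine ⟨(univ.image σ).image fun c => {v | σ v = c}, card_image_le.trans hcard,
    ⟨fun S hS => ?_, fun v => ⟨_, mem_image_of_mem _ (mem_image_of_mem σ (mem_univ v)), rfl⟩⟩,
    fun S hS T hT hST v hvS hvT => ?_⟩
  · obtain ⟨_, hc, rfl⟩ := mem_image.mp hS
    obtain ⟨w, -, rfl⟩ := mem_image.mp hc
    simpa using (hσ w (mem_univ w)).isInducedStarSet_or_isSingletonSet
  · obtain ⟨_, -, rfl⟩ := mem_image.mp hS
    obtain ⟨_, -, rfl⟩ := mem_image.mp hT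
    exact hST (hvS.symm.trans hvT ▸ rfl)

theorem insp_le_of_hasStarPartition {k : ℕ} (h : HasStarPartition G univ k) : insp G ≤ k := by
  obtain ⟨P, hcard, hP⟩ := h.exists_isPartitionBy
  have hP' : insp G ≤ P.card := Nat.sInf_le ⟨P, rfl, hP⟩
  exact hP'.trans hcard

theorem IsPartitionBy.hasStarPartition {P : Finset (Set V)}
    (hP : IsPartitionBy P (fun S => IsInducedStarSet G S ∨ IsSingletonSet S)) :
    HasStarPartition G univ P.card := by
  obtain ⟨⟨hstar, hcover⟩, hdisj⟩ := hP
  have hunique : ∀ S T : {S // S ∈ P}, ∀ v, v ∈ S.1 → v ∈ T.1 → S = T := fun S T v hS hT =>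
    by_contra fun hST => hdisj S.1 S.2 T.1 T.2 (fun h => hST (Subtype.ext h)) v hS hT
  have hpart : ∀ v, ∃ S : {S // S ∈ P}, v ∈ S.1 := fun v =>
    let ⟨S, hS, hv⟩ := hcover v
    ⟨⟨S, hS⟩, hv⟩
  choose part hpart using hpart
  choose ctr hctr using fun S : {S // S ∈ P} => exists_isStarCenter (hstar S.1 S.2)
  refine ⟨fun v => ctr (part v), fun v _ => ?_, ?_⟩
  · have hblock : {u | u ∈ univ ∧ ctr (part u) = ctr (part v)} = (part v).1 := by
      ext u
      simp only [mem_univ, true_and, Set.mem_ofPred_eq]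
      constructor
      · intro h
        have := (hctr (part u)).mem
        rw [h] at this
        exact hunique _ _ _ (hctr (part v)).mem this ▸ hpart u
      · intro hu
        rw [hunique _ _ u (hpart u) hu]
    rw [hblock]
    exact hctr (part v)
  · calc (univ.image fun v => ctr (part v)).card ≤ (univ.image ctr).card :=
          card_le_card fun c hc => by
            obtain ⟨v, -, rfl⟩ := mem_image.mp hc
            exact mem_image_of_mem ctr (mem_univ _)
      _ ≤ P.card := card_image_le.trans (by simp)

theorem hasStarPartition_insp : HasStarPartition G univ (insp G) := by
  have hsingletons : HasStarPartition G univ (Fintype.card V) := by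
    refine ⟨id, fun v _ => ?_, card_image_le.trans (by simp)⟩
    exact ⟨by simp, by simp, by simp⟩
  obtain ⟨P, -, hP⟩ := hsingletons.exists_isPartitionBy
  obtain ⟨Q, hQcard, hQ⟩ := Nat.sInf_mem (⟨_, P, rfl, hP⟩ : {k | ∃ P : Finset (Set V),
    P.card = k ∧ IsPartitionBy P (fun S => IsInducedStarSet G S ∨ IsSingletonSet S)}.Nonempty)
  rw [show insp G = Q.card from hQcard.symm]
  exact hQ.hasStarPartition

end StarPartitions

/-! ### Lower bounds -/

section LowerBounds

variable {V : Type*} [Fintype V] [DecidableEq V] {G : SimpleGraph V}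

theorem card_le_mul_insp (T : Finset V) (b : ℕ)
    (hb : ∀ (F : Finset V) (c : V), IsStarCenter G F c → (T ∩ F).card ≤ b) :
    T.card ≤ b * insp G := by
  obtain ⟨σ, hσ, hcard⟩ := hasStarPartition_insp (G := G)
  calc T.card ≤ b * (T.image σ).card := by
        refine card_le_mul_card_image T b fun c hc => ?_
        obtain ⟨w, -, rfl⟩ := mem_image.mp hc
        refine (card_le_card fun a ha => ?_).trans
          (hb (univ.filter (σ · = σ w)) _ (by simpa using hσ w (mem_univ w)))
        simpa using ha
    _ ≤ b * insp G :=
        Nat.mul_le_mul_left b ((card_le_card (image_subset_image (subset_univ T))).trans hcard)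

end LowerBounds

theorem le_two_mul_insp_completeGraph (M : ℕ) : M ≤ 2 * insp (completeGraph (Fin M)) := by
  simpa using card_le_mul_insp (G := completeGraph (Fin M)) univ 2 fun F c hFc => by
    have hleaves : (F.erase c).card ≤ 1 := card_le_one.mpr fun u hu v hv => by
      rw [mem_erase] at hu hv
      by_contra huv
      exact hFc.not_adj u hu.2 v hv.2 hu.1 hv.1 huv
    have := pred_card_le_card_erase (s := F) (a := c)
    rw [univ_inter]
    omega

theorem le_three_mul_insp_pathGraph (M : ℕ) : M ≤ 3 * insp (pathGraph M) := by
  simpa using card_le_mul_insp (G := pathGraph M) univ 3 fun F c hFc => by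
    calc (univ ∩ F).card ≤ (Icc (c.val - 1) (c.val + 1)).card := by
          refine card_le_card_of_injOn Fin.val (fun v hv => ?_) Fin.val_injective.injOn
          have hv : v ∈ F := (mem_inter.mp hv).2
          have : v = c ∨ (pathGraph M).Adj c v := by
            by_cases hvc : v = c
            · exact Or.inl hvc
            · exact Or.inr (hFc.adj v hv hvc)
          simp only [coe_Icc, Set.mem_Icc, pathGraph_adj] at this ⊢
          rcases this with rfl | h | h <;> omega
      _ ≤ 3 := by simp; omega

theorem le_insp_sStar (M : ℕ) : M ≤ insp (SStar M) := by
  have hz : Function.Injective fun i : Fin M => (Sum.inr (Sum.inr i) : Unit ⊕ Fin M ⊕ Fin M) :=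
    fun i j h => by simpa using h
  have hzz : ∀ i j : Fin M, ¬ (SStar M).Adj (Sum.inr (Sum.inr i)) (Sum.inr (Sum.inr j)) := by
    simp [SStar]
  have := card_le_mul_insp (G := SStar M) (univ.image fun i => Sum.inr (Sum.inr i)) 1
    fun F c hFc => card_le_one.mpr fun u hu v hv => by
      simp only [mem_inter, mem_image, mem_univ, true_and] at hu hv
      obtain ⟨⟨i, rfl⟩, hiF⟩ := hu
      obtain ⟨⟨j, rfl⟩, hjF⟩ := hv
      by_contra hij
      by_cases hic : Sum.inr (Sum.inr i) = c
      · exact hzz i j (hic ▸ hFc.adj _ hjF fun h => hij (h.trans hic.symm).symm)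
      by_cases hjc : Sum.inr (Sum.inr j) = c
      · exact hzz j i (hjc ▸ hFc.adj _ hiF fun h => hij (h.trans hjc.symm))
      have hci := hFc.adj _ hiF hic
      have hcj := hFc.adj _ hjF hjc
      rcases c with _ | k | k <;> simp [SStar] at hci hcj
      exact hij (by rw [hci, hcj])
  simpa [card_image_of_injective _ hz] using this

theorem sTilde_leg_of_adj_leg {M : ℕ} {a b : Unit ⊕ Fin M ⊕ Fin M} {i : Fin M}
    (hb : b = Sum.inr (Sum.inl i) ∨ b = Sum.inr (Sum.inr i)) (hab : (STilde M).Adj a b)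
    (ha : a ≠ Sum.inl ()) : a = Sum.inr (Sum.inl i) ∨ a = Sum.inr (Sum.inr i) := by
  rcases hb with rfl | rfl <;> rcases a with _ | j | j <;> simp_all [STilde, eq_comm]

theorem lt_insp_sTilde (M : ℕ) : M < insp (STilde M) := by
  obtain ⟨σ, hσ, hcard⟩ := hasStarPartition_insp (G := STilde M)
  -- the part of the centre contains no triangle `x yᵢ zᵢ`
  have hleg : ∀ i : Fin M, ∃ v, (v = Sum.inr (Sum.inl i) ∨ v = Sum.inr (Sum.inr i)) ∧
      σ v ≠ σ (Sum.inl ()) := by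
    intro i
    by_contra! h
    exact (hσ (Sum.inl ()) (mem_univ _)).not_triangle (a := Sum.inl ()) (b := Sum.inr (Sum.inl i))
      (d := Sum.inr (Sum.inr i)) (by simp) (by simpa using h _ (Or.inl rfl))
      (by simpa using h _ (Or.inr rfl)) (by simp [STilde])
  choose w hw hwx using hleg
  have hpair : ∀ i, σ (w i) = Sum.inr (Sum.inl i) ∨ σ (w i) = Sum.inr (Sum.inr i) := by
    intro i
    by_cases hc : σ (w i) = w i
    · rw [hc]
      exact hw i
    refine sTilde_leg_of_adj_leg (hw i) (hσ.adj (mem_univ _) hc) fun hx => hwx i ?_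
    rw [← hx, hσ.apply_apply (mem_univ _)]
  have hinj : Function.Injective fun i => σ (w i) := by
    intro i j hij
    rcases hpair i with hi | hi <;> rcases hpair j with hj | hj <;> simp_all
  have hsub : univ.image (fun i => σ (w i)) ⊆ (univ.image σ).erase (σ (Sum.inl ())) :=
    fun c hc => by
      obtain ⟨i, -, rfl⟩ := mem_image.mp hc
      exact mem_erase.mpr ⟨hwx i, mem_image_of_mem σ (mem_univ _)⟩
  have := card_le_card hsub
  rw [card_image_of_injective _ hinj, card_erase_of_mem (mem_image_of_mem σ (mem_univ _)),
    card_univ, Fintype.card_fin] at this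
  have hpos : 0 < (univ.image σ).card :=
    card_pos.mpr ⟨_, mem_image_of_mem σ (mem_univ (Sum.inl ()))⟩
  omega

theorem sStar_connected (M : ℕ) : (SStar M).Connected := by
  refine (connected_iff_exists_forall_reachable _).mpr ⟨Sum.inl (), ?_⟩
  rintro (⟨⟩ | i | i)
  · rfl
  · exact Adj.reachable (by simp [SStar])
  · exact (Adj.reachable (v := Sum.inr (Sum.inl i)) (by simp [SStar])).trans
      (Adj.reachable (by simp [SStar]))

theorem sStar_le_sTilde (M : ℕ) : SStar M ≤ STilde M := fun a b h => by
  simp only [SStar, STilde, fromRel_adj] at h ⊢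
  aesop

theorem sTilde_connected (M : ℕ) : (STilde M).Connected :=
  (sStar_connected M).mono (sStar_le_sTilde M)

/-! ### The upper bound -/

section Ramsey

variable {V : Type*} {G : SimpleGraph V}

theorem SimpleGraph.IsIndepSet.not_adj {s : Set V} (hs : G.IsIndepSet s) {u v : V}
    (hu : u ∈ s) (hv : v ∈ s) : ¬ G.Adj u v :=
  fun huv => hs hu hv huv.ne huv

theorem SimpleGraph.CliqueFree.card_lt_of_isClique {n : ℕ} (hK : G.CliqueFree n)
    {s : Finset V} (hs : G.IsClique (s : Set V)) : s.card < n := by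
  by_contra! hns
  obtain ⟨t, hts, htn⟩ := exists_subset_card_eq hns
  exact hK t ⟨hs.subset (coe_subset.mpr hts), htn⟩

theorem SimpleGraph.CliqueFree.not_forall_adj_of_isClique {n : ℕ} (hK : G.CliqueFree n)
    {K : Finset V} (hKc : G.IsClique (K : Set V)) (hcard : n ≤ K.card + 1) (v : V) :
    ¬ ∀ k ∈ K, G.Adj k v := fun hv => by
  classical
  have hvK : v ∉ K := fun h => G.loopless.irrefl v (hv v h)
  have := hK.card_lt_of_isClique (s := insert v K)
    (by rw [coe_insert]; exact hKc.insert fun k hk _ => (hv k hk).symm)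
  rw [card_insert_of_notMem hvK] at this
  omega

theorem exists_isIndepSet_dominating (S : Finset V) :
    ∃ I ⊆ S, G.IsIndepSet (I : Set V) ∧ ∀ w ∈ S, w ∉ I → ∃ u ∈ I, G.Adj u w := by
  classical
  induction S using Finset.induction_on with
  | empty => exact ⟨∅, subset_rfl, by simp, by simp⟩
  | insert a S _ ih =>
    obtain ⟨I, hIS, hI, hdom⟩ := ih
    by_cases ha : ∃ u ∈ I, G.Adj u a
    · refine ⟨I, hIS.trans (subset_insert a S), hI, fun w hw hwI => ?_⟩
      rcases mem_insert.mp hw with rfl | hw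
      · exact ha
      · exact hdom w hw hwI
    push Not at ha
    refine ⟨insert a I, insert_subset_insert a hIS, ?_, fun w hw hwI => ?_⟩
    · rw [coe_insert]
      exact hI.insert fun u hu _ => ⟨fun h => ha u hu h.symm, ha u hu⟩
    · obtain ⟨hwa, hwI⟩ := not_or.mp (mem_insert.not.mp hwI)
      obtain ⟨u, hu, huw⟩ := hdom w ((mem_insert.mp hw).resolve_left hwa) hwI
      exact ⟨u, mem_insert_of_mem hu, huw⟩

theorem exists_isNClique_or_isNIndepSet (a b : ℕ) (s : Finset V) (hs : 2 ^ (a + b) ≤ s.card) :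
    ∃ t ⊆ s, G.IsNClique a t ∨ G.IsNIndepSet b t := by
  classical
  induction a generalizing b s with
  | zero => exact ⟨∅, empty_subset s, Or.inl (by simp)⟩
  | succ a iha =>
    induction b generalizing s with
    | zero => exact ⟨∅, empty_subset s, Or.inr (by simp [isNIndepSet_iff])⟩
    | succ b ihb =>
      obtain ⟨v, hv⟩ : s.Nonempty := card_pos.mp (lt_of_lt_of_le (by positivity) hs)
      have hsplit := card_filter_add_card_filter_not (s := s.erase v) (G.Adj v)
      rw [card_erase_of_mem hv] at hsplit
      have hN : (s.erase v).filter (G.Adj v) ⊆ s := (filter_subset _ _).trans (erase_subset v s)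
      have hM : (s.erase v).filter (¬ G.Adj v ·) ⊆ s :=
        (filter_subset _ _).trans (erase_subset v s)
      have hlarge : 2 ^ (a + (b + 1)) ≤ ((s.erase v).filter (G.Adj v)).card ∨
          2 ^ (a + 1 + b) ≤ ((s.erase v).filter (¬ G.Adj v ·)).card := by
        rw [show a + 1 + (b + 1) = a + (b + 1) + 1 by ring, pow_succ] at hs
        rw [show a + 1 + b = a + (b + 1) by ring]
        omega
      rcases hlarge with hlarge | hlarge
      · obtain ⟨t, hts, ht | ht⟩ := iha (b + 1) _ hlarge
        · refine ⟨insert v t, insert_subset hv (hts.trans hN), Or.inl ?_⟩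
          exact ht.insert fun w hw => (mem_filter.mp (hts hw)).2
        · exact ⟨t, hts.trans hN, Or.inr ht⟩
      · obtain ⟨t, hts, ht | ht⟩ := ihb _ hlarge
        · exact ⟨t, hts.trans hM, Or.inl ht⟩
        · refine ⟨insert v t, insert_subset hv (hts.trans hM), Or.inr ?_⟩
          rw [← isNClique_compl] at ht ⊢
          refine ht.insert fun w hw => (compl_adj G v w).mpr ?_
          obtain ⟨hw, hvw⟩ := mem_filter.mp (hts hw)
          exact ⟨(ne_of_mem_erase hw).symm, hvw⟩

end Ramsey

section Spider

variable {V : Type*} {G : SimpleGraph V} {n : ℕ}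

/-- The common part of `S*_n` and `S̃_n` (centre `c`, middle vertices `y i`, leaves `z i`). -/
structure IsSpider (G : SimpleGraph V) (c : V) (y z : Fin n → V) : Prop where
  adj_center : ∀ i, G.Adj c (y i)
  adj_leg_iff : ∀ i j, G.Adj (y i) (z j) ↔ i = j
  not_adj_y : ∀ i j, ¬ G.Adj (y i) (y j)
  not_adj_z : ∀ i j, ¬ G.Adj (z i) (z j)

namespace IsSpider

variable {c : V} {y z : Fin n → V}

theorem injective_elim (h : IsSpider G c y z) (hzc : ∀ i, z i ≠ c) :
    Function.Injective (Sum.elim (fun _ : Unit => c) (Sum.elim y z)) := by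
  have hy : ∀ i j, y i = y j → i = j := fun i j hij =>
    ((h.adj_leg_iff j i).mp (hij ▸ (h.adj_leg_iff i i).mpr rfl)).symm
  have hz : ∀ i j, z i = z j → i = j := fun i j hij =>
    (h.adj_leg_iff i j).mp (hij ▸ (h.adj_leg_iff i i).mpr rfl)
  have hyz : ∀ i j, y i ≠ z j := fun i j hij =>
    h.not_adj_y j i (hij ▸ (h.adj_leg_iff j j).mpr rfl)
  rintro (⟨⟩ | i | i) (⟨⟩ | j | j) hij <;> simp only [Sum.elim_inl, Sum.elim_inr] at hij
  · rfl
  · exact absurd hij (h.adj_center j).ne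
  · exact absurd hij.symm (hzc j)
  · exact absurd hij.symm (h.adj_center i).ne
  · rw [hy i j hij]
  · exact absurd hij (hyz i j)
  · exact absurd hij (hzc i)
  · exact absurd hij.symm (hyz j i)
  · rw [hz i j hij]

theorem hasInducedCopy_sStar (h : IsSpider G c y z) (hcz : ∀ i, ¬ G.Adj c (z i))
    (hzc : ∀ i, z i ≠ c) : HasInducedCopy G (SStar n) := by
  refine ⟨⟨_, h.injective_elim hzc⟩, ?_⟩
  rintro (⟨⟩ | i | i) (⟨⟩ | j | j) <;>
    simp [SStar, h.adj_center, h.adj_leg_iff, h.not_adj_y, h.not_adj_z, hcz, G.adj_comm,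
      eq_comm]

theorem hasInducedCopy_sTilde (h : IsSpider G c y z) (hcz : ∀ i, G.Adj c (z i)) :
    HasInducedCopy G (STilde n) := by
  refine ⟨⟨_, h.injective_elim fun i => (hcz i).ne.symm⟩, ?_⟩
  rintro (⟨⟩ | i | i) (⟨⟩ | j | j) <;>
    simp [STilde, h.adj_center, h.adj_leg_iff, h.not_adj_y, h.not_adj_z, hcz, G.adj_comm,
      eq_comm]

end IsSpider

end Spider

section Domination

variable {V : Type*} {G : SimpleGraph V} {n : ℕ}

theorem exists_dominating_subset_with_private_neighbor (I W : Finset V)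
    (hW : ∀ w ∈ W, ∃ u ∈ I, G.Adj u w) :
    ∃ U ⊆ I, (∀ w ∈ W, ∃ u ∈ U, G.Adj u w) ∧
      ∀ u ∈ U, ∃ w ∈ W, G.Adj u w ∧ ∀ u' ∈ U, G.Adj u' w → u' = u := by
  classical
  have hex : ∃ k, ∃ U ⊆ I, U.card = k ∧ ∀ w ∈ W, ∃ u ∈ U, G.Adj u w :=
    ⟨_, I, subset_rfl, rfl, hW⟩
  obtain ⟨U, hUI, hUk, hUW⟩ := Nat.find_spec hex
  refine ⟨U, hUI, hUW, fun u hu => ?_⟩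
  by_contra! hshared
  have hsmaller :=
    Nat.find_min' hex ⟨U.erase u, (erase_subset u U).trans hUI, rfl, fun w hw => ?_⟩
  · have := card_erase_lt_of_mem hu
    omega
  obtain ⟨u', hu', hu'w⟩ := hUW w hw
  by_cases hu'u : u' = u
  · obtain ⟨u'', hu'', hu''w, hne⟩ := hshared w hw (hu'u ▸ hu'w)
    exact ⟨u'', mem_erase.mpr ⟨hne, hu''⟩, hu''w⟩
  · exact ⟨u', mem_erase.mpr ⟨hu'u, hu'⟩, hu'w⟩

theorem exists_isSpider_of_private_neighbor (hK : G.CliqueFree n) {c : V} {T : Finset V}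
    (hTc : ∀ u ∈ T, G.Adj c u) (hT : G.IsIndepSet T) (p : V → V)
    (hp : ∀ u ∈ T, G.Adj u (p u) ∧ ∀ u' ∈ T, G.Adj u' (p u) → u' = u)
    (hcard : 4 ^ n ≤ T.card) :
    ∃ y z : Fin n → V, IsSpider G c y z ∧ ∀ i, y i ∈ T ∧ z i = p (y i) := by
  classical
  have hinj : Set.InjOn p T := fun u hu u' hu' h =>
    ((hp u hu).2 u' hu' (h ▸ (hp u' hu').1)).symm
  obtain ⟨t, hts, ht | ht⟩ := exists_isNClique_or_isNIndepSet (G := G) n n (T.image p)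
    (by rwa [card_image_of_injOn hinj, ← two_mul, pow_mul])
  · exact absurd ht (hK t)
  set e := t.equivFinOfCardEq ht.card_eq
  have hpre : ∀ i : Fin n, ∃ u ∈ T, p u = e.symm i := fun i => mem_image.mp (hts (e.symm i).2)
  choose y hyT hyz using hpre
  refine ⟨y, fun i => p (y i), ⟨fun i => hTc _ (hyT i), fun i j => ?_, fun i j => ?_,
    fun i j => ?_⟩, fun i => ⟨hyT i, rfl⟩⟩
  · refine ⟨fun hij => ?_, fun hij => hij ▸ (hp _ (hyT i)).1⟩
    have := (hp _ (hyT j)).2 _ (hyT i) hij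
    exact e.symm.injective (Subtype.ext (by rw [← hyz, ← hyz, this]))
  · exact hT.not_adj (hyT i) (hyT j)
  · simp only [hyz]
    exact ht.isIndepSet.not_adj (coe_mem _) (coe_mem _)

theorem exists_dominating_subset_card_le (hK : G.CliqueFree n)
    (hS : ¬ HasInducedCopy G (SStar n)) (hT : ¬ HasInducedCopy G (STilde n)) {c : V}
    {I W : Finset V} (hIc : ∀ u ∈ I, G.Adj c u) (hI : G.IsIndepSet I) (hcW : c ∉ W)
    (hW : ∀ w ∈ W, ∃ u ∈ I, G.Adj u w) :
    ∃ U ⊆ I, U.card ≤ 2 * 4 ^ n ∧ ∀ w ∈ W, ∃ u ∈ U, G.Adj u w := by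
  classical
  obtain ⟨U, hUI, hUW, hpriv⟩ := exists_dominating_subset_with_private_neighbor I W hW
  refine ⟨U, hUI, ?_, hUW⟩
  choose! q hqW hq using hpriv
  have hspider : ∀ T ⊆ U, 4 ^ n ≤ T.card → ∃ y z : Fin n → V, IsSpider G c y z ∧
      ∀ i, y i ∈ T ∧ z i = q (y i) := fun T hTU hcard =>
    exists_isSpider_of_private_neighbor hK (fun u hu => hIc u (hUI (hTU hu)))
      (Set.Pairwise.mono (coe_subset.mpr (hTU.trans hUI)) hI) q
      (fun u hu => ⟨(hq u (hTU hu)).1, fun u' hu' => (hq u (hTU hu)).2 u' (hTU hu')⟩) hcard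
  by_contra! hbig
  have hsplit := card_filter_add_card_filter_not (s := U) (fun u => G.Adj c (q u))
  rcases le_or_gt (4 ^ n) (U.filter fun u => G.Adj c (q u)).card with hT₁ | hT₁
  · obtain ⟨y, z, hyz, hyzT⟩ := hspider _ (filter_subset _ _) hT₁
    refine hT (hyz.hasInducedCopy_sTilde fun i => ?_)
    rw [(hyzT i).2]
    exact (mem_filter.mp (hyzT i).1).2
  · obtain ⟨y, z, hyz, hyzT⟩ :=
      hspider (U.filter fun u => ¬ G.Adj c (q u)) (filter_subset _ _) (by omega)
    refine hS (hyz.hasInducedCopy_sStar (fun i => ?_) fun i => ?_) <;> rw [(hyzT i).2]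
    · exact (mem_filter.mp (hyzT i).1).2
    · exact fun h => hcW (h ▸ hqW _ (filter_subset _ _ (hyzT i).1))

end Domination

section LocalPartition

variable {V : Type*} [DecidableEq V] {G : SimpleGraph V} {n : ℕ}

theorem exists_star_and_cones (hK : G.CliqueFree n) (hS : ¬ HasInducedCopy G (SStar n))
    (hT : ¬ HasInducedCopy G (STilde n)) {c : V} {A : Finset V} (hc : c ∈ A)
    (hA : ∀ v ∈ A, v ≠ c → G.Adj c v) :
    ∃ U : Finset V, U.card ≤ 2 * 4 ^ n ∧ c ∉ U ∧ ∃ β : V → V, (∀ v ∈ A, β v ∈ insert c U) ∧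
      IsStarCenter G ↑(A.filter (β · = c)) c ∧
      ∀ u ∈ U, u ∈ A ∧ β u = u ∧ ∀ v ∈ A, β v = u → v ≠ u → G.Adj u v := by
  obtain ⟨I, hIS, hI, hImax⟩ := exists_isIndepSet_dominating (G := G) (A.erase c)
  set W := A.erase c \ I
  have hIc : ∀ u ∈ I, G.Adj c u := fun u hu =>
    hA u (mem_of_mem_erase (hIS hu)) (ne_of_mem_erase (hIS hu))
  obtain ⟨U, hUI, hUcard, hUW⟩ := exists_dominating_subset_card_le hK hS hT hIc hI
    (W := W) (by simp [W]) fun w hw => hImax w (mem_sdiff.mp hw).1 (mem_sdiff.mp hw).2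
  have hcU : c ∉ U := fun h => (ne_of_mem_erase (hIS (hUI h))) rfl
  choose! d hdU hd using hUW
  let β : V → V := fun v => if v ∈ W then d v else if v ∈ U then v else c
  have hβc : ∀ v ∈ A, β v = c → v ≠ c → v ∈ I := by
    intro v hv hvβ hvc
    by_contra hvI
    have hvW : v ∈ W := mem_sdiff.mpr ⟨mem_erase.mpr ⟨hvc, hv⟩, hvI⟩
    simp only [β, if_pos hvW] at hvβ
    exact hcU (hvβ ▸ hdU v hvW)
  refine ⟨U, hUcard, hcU, β, fun v hv => ?_, ⟨?_, fun v hv hvc => ?_, fun u hu v hv huc hvc => ?_⟩,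
    fun u hu => ⟨mem_of_mem_erase (hIS (hUI hu)), ?_, fun v hv hvu huv => ?_⟩⟩
  · simp only [β]
    split_ifs with hvW hvU
    · exact mem_insert_of_mem (hdU v hvW)
    · exact mem_insert_of_mem hvU
    · exact mem_insert_self c U
  · simp [β, W, hc, hcU]
  · exact hA v (mem_filter.mp hv).1 hvc
  · obtain ⟨hu, hβu⟩ := mem_filter.mp hu
    obtain ⟨hv, hβv⟩ := mem_filter.mp hv
    exact hI.not_adj (hβc u hu hβu huc) (hβc v hv hβv hvc)
  · have : u ∉ W := fun h => (mem_sdiff.mp h).2 (hUI hu)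
    simp [β, this, hu]
  · simp only [β] at hvu
    split_ifs at hvu with hvW hvU
    · exact hvu ▸ hd v hvW
    · exact absurd hvu huv
    · exact absurd (hvu ▸ hu) hcU

theorem hasStarPartition_of_forall_adj_clique (hK : G.CliqueFree n)
    (hS : ¬ HasInducedCopy G (SStar n)) (hT : ¬ HasInducedCopy G (STilde n)) (j : ℕ) :
    ∀ (K A : Finset V) (c : V), c ∈ K → c ∈ A → G.IsClique (K : Set V) → n ≤ K.card + j + 1 →
      (∀ v ∈ A, v ≠ c → ∀ k ∈ K, G.Adj k v) → HasStarPartition G A ((2 * 4 ^ n + 1) ^ j) := by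
  induction j with
  | zero =>
    intro K A c hcK hcA hKc hcard hA
    have hAc : ∀ v ∈ A, v = c := fun v hv =>
      by_contra fun hvc => hK.not_forall_adj_of_isClique hKc (by omega) v (hA v hv hvc)
    refine IsStarCenter.hasStarPartition ⟨hcA, fun v hv hvc => ?_, fun u hu _ _ huc _ => ?_⟩
    · exact absurd (hAc v hv) hvc
    · exact absurd (hAc u hu) huc
  | succ j ih =>
    intro K A c hcK hcA hKc hcard hA
    obtain ⟨U, hUcard, hcU, β, hβ, hstar, hcone⟩ :=
      exists_star_and_cones hK hS hT hcA fun v hv hvc => hA v hv hvc c hcK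
    refine (hasStarPartition_of_fibers (k := (2 * 4 ^ n + 1) ^ j) β (insert c U) hβ
      fun i hi => ?_).mono ?_
    · rcases mem_insert.mp hi with rfl | hiU
      · exact hstar.hasStarPartition.mono (Nat.one_le_pow _ _ (by positivity))
      obtain ⟨hiA, hβi, hadj⟩ := hcone i hiU
      have hic : i ≠ c := fun h => hcU (h ▸ hiU)
      have hiK : ∀ k ∈ K, G.Adj k i := hA i hiA hic
      have hiK' : i ∉ K := fun h => G.loopless.irrefl i (hiK i h)
      refine ih (insert i K) _ i (mem_insert_self i K) (mem_filter.mpr ⟨hiA, hβi⟩) ?_ ?_ ?_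
      · rw [coe_insert]
        exact hKc.insert fun k hk _ => (hiK k hk).symm
      · rw [card_insert_of_notMem hiK']
        omega
      · intro v hv hvi k hk
        obtain ⟨hvA, hβv⟩ := mem_filter.mp hv
        have hvc : v ≠ c := by
          rintro rfl
          exact hic (hβv.symm.trans (mem_filter.mp hstar.mem).2)
        rcases mem_insert.mp hk with rfl | hk
        · exact hadj v hvA hβv hvi
        · exact hA v hvA hvc k hk
    · calc (insert c U).card * (2 * 4 ^ n + 1) ^ j ≤ (2 * 4 ^ n + 1) * (2 * 4 ^ n + 1) ^ j :=
          Nat.mul_le_mul_right _ ((card_insert_le c U).trans (by omega))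
        _ = (2 * 4 ^ n + 1) ^ (j + 1) := (pow_succ' _ _).symm

end LocalPartition

section Distance

variable {V : Type*} {G : SimpleGraph V}

theorem SimpleGraph.Walk.not_adj_getVert_of_length_eq_dist {u v : V} (p : G.Walk u v)
    (hp : p.length = G.dist u v) {i j : ℕ} (hij : i + 2 ≤ j) (hj : j ≤ p.length) :
    ¬ G.Adj (p.getVert i) (p.getVert j) := fun h => by
  have := dist_le ((p.take i).append (Walk.cons h (p.drop j)))
  simp only [Walk.length_append, Walk.take_length, Walk.length_cons, Walk.drop_length] at this
  omega

theorem SimpleGraph.Connected.dist_add_one_lt_of_not_hasInducedCopy {n : ℕ}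
    (hconn : G.Connected) (hP : ¬ HasInducedCopy G (pathGraph n)) (u v : V) :
    G.dist u v + 1 < n := by
  by_contra! hn
  obtain ⟨p, hp⟩ := hconn.exists_walk_length_eq_dist u v
  have hinj := (p.isPath_of_length_eq_dist hp).getVert_injOn
  refine hP ⟨⟨fun i => p.getVert i,
    fun i j hij => Fin.ext (hinj (by simp; omega) (by simp; omega) hij)⟩, fun i j => ?_⟩
  change G.Adj (p.getVert i) (p.getVert j) ↔ _
  rw [pathGraph_adj]
  constructor
  · intro h
    by_contra! hfar
    rcases lt_trichotomy (i : ℕ) j with hlt | heq | hlt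
    · exact p.not_adj_getVert_of_length_eq_dist hp (by omega) (by omega) h
    · exact G.loopless.irrefl _ (Fin.ext heq ▸ h)
    · exact p.not_adj_getVert_of_length_eq_dist hp (by omega) (by omega) h.symm
  · rintro (h | h)
    · rw [← h]
      exact p.adj_getVert_succ (by omega)
    · rw [← h]
      exact (p.adj_getVert_succ (by omega)).symm

theorem SimpleGraph.Connected.exists_dist_le_of_dist_le_succ (hconn : G.Connected) (r : V)
    {v : V} {k : ℕ} (hv : G.dist r v ≤ k + 1) : ∃ u, G.dist r u ≤ k ∧ (u = v ∨ G.Adj u v) := by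
  obtain ⟨p, hp⟩ := hconn.exists_walk_length_eq_dist r v
  by_cases hnil : p.Nil
  · exact ⟨v, by simp [hnil.eq], Or.inl rfl⟩
  refine ⟨p.penultimate, ?_, Or.inr (p.adj_penultimate hnil)⟩
  have := dist_le p.dropLast
  rw [Walk.length_dropLast] at this
  omega

end Distance

section GlobalPartition

variable {V : Type*} [Fintype V] {G : SimpleGraph V} {n : ℕ}

theorem IsStarPartition.exists_dominating_outer_neighbors (hK : G.CliqueFree n)
    (hS : ¬ HasInducedCopy G (SStar n)) (hT : ¬ HasInducedCopy G (STilde n)) {A : Finset V}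
    {σ : V → V} (hσ : IsStarPartition G A σ) (c : V) :
    ∃ U : Finset V, U.card ≤ 2 * 4 ^ n ∧ ∀ y, ¬ (c = y ∨ G.Adj c y) →
      ∀ z ∈ A, σ z = c → z ≠ c → G.Adj z y → ∃ u ∈ U, G.Adj u y := by
  classical
  set L := (A.filter (σ · = c)).erase c
  have hL : ∀ z ∈ L, z ∈ A ∧ σ z = c ∧ z ≠ c := fun z hz => by
    obtain ⟨hzc, hz⟩ := mem_erase.mp hz
    exact ⟨(mem_filter.mp hz).1, (mem_filter.mp hz).2, hzc⟩
  obtain ⟨U, -, hUcard, hUW⟩ := exists_dominating_subset_card_le hK hS hT (I := L)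
    (W := univ.filter fun y => ¬ (c = y ∨ G.Adj c y) ∧ ∃ z ∈ L, G.Adj z y)
    (fun z hz => by
      obtain ⟨hzA, hzc, hne⟩ := hL z hz
      exact hzc ▸ hσ.adj hzA (hzc ▸ hne.symm))
    (fun u hu v hv _ => by
      obtain ⟨huA, huc, hune⟩ := hL u hu
      obtain ⟨hvA, hvc, hvne⟩ := hL v hv
      exact hσ.not_adj huA hvA (huc.trans hvc.symm) (huc ▸ hune.symm) (hvc ▸ hvne.symm))
    (by simp) (fun y hy => (mem_filter.mp hy).2.2)
  exact ⟨U, hUcard, fun y hy z hz hzc hne hzy => hUW y (mem_filter.mpr ⟨mem_univ y, hy, z,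
    mem_erase.mpr ⟨hne, mem_filter.mpr ⟨hz, hzc⟩⟩, hzy⟩)⟩

theorem exists_dominating_ball_two (hK : G.CliqueFree n)
    (hS : ¬ HasInducedCopy G (SStar n)) (hT : ¬ HasInducedCopy G (STilde n)) (x : V) :
    ∃ X : Finset V, X.card ≤ (2 * 4 ^ n + 1) ^ (n + 1) ∧
      ∀ y z, (x = z ∨ G.Adj x z) → (z = y ∨ G.Adj z y) → ∃ w ∈ X, w = y ∨ G.Adj w y := by
  classical
  set A := insert x (univ.filter (G.Adj x))
  obtain ⟨σ, hσ, hcard⟩ := hasStarPartition_of_forall_adj_clique hK hS hT n {x} A x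
    (mem_singleton_self x) (mem_insert_self _ _) (by simp) (by rw [card_singleton]; omega)
    fun v hv hvx k hk => by simpa [mem_singleton.mp hk, A, hvx] using hv
  choose U hUcard hUdom using hσ.exists_dominating_outer_neighbors hK hS hT
  refine ⟨(A.image σ).biUnion fun c => insert c (U c), ?_, fun y z hxz hzy => ?_⟩
  · calc ((A.image σ).biUnion fun c => insert c (U c)).card
        ≤ ∑ c ∈ A.image σ, (insert c (U c)).card := card_biUnion_le
      _ ≤ (A.image σ).card * (2 * 4 ^ n + 1) := by
          refine (sum_le_card_nsmul _ _ _ fun c _ => ?_).trans_eq (smul_eq_mul _ _)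
          exact (card_insert_le c (U c)).trans (by have := hUcard c; omega)
      _ ≤ (2 * 4 ^ n + 1) ^ n * (2 * 4 ^ n + 1) := Nat.mul_le_mul_right _ hcard
      _ = (2 * 4 ^ n + 1) ^ (n + 1) := (pow_succ _ _).symm
  have hzA : z ∈ A := by
    rcases hxz with hxz | hxz
    · exact hxz ▸ mem_insert_self x _
    · exact mem_insert_of_mem (mem_filter.mpr ⟨mem_univ z, hxz⟩)
  have hσz : σ z ∈ A.image σ := mem_image_of_mem σ hzA
  by_cases hy : σ z = y ∨ G.Adj (σ z) y
  · exact ⟨σ z, mem_biUnion.mpr ⟨σ z, hσz, mem_insert_self _ _⟩, hy⟩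
  have hzc : σ z ≠ z := fun h => hy (by rw [h]; exact hzy)
  have hzy' : G.Adj z y := hzy.resolve_left fun h => hy (Or.inr (h ▸ hσ.adj hzA hzc))
  obtain ⟨u, hu, huy⟩ := hUdom (σ z) y hy z hzA rfl (Ne.symm hzc) hzy'
  exact ⟨u, mem_biUnion.mpr ⟨σ z, hσz, mem_insert_of_mem hu⟩, Or.inr huy⟩

theorem exists_dominating_ball (hK : G.CliqueFree n) (hS : ¬ HasInducedCopy G (SStar n))
    (hT : ¬ HasInducedCopy G (STilde n)) (hconn : G.Connected) (r : V) (k : ℕ) :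
    ∃ X : Finset V, X.card ≤ ((2 * 4 ^ n + 1) ^ (n + 1)) ^ k ∧
      ∀ v, G.dist r v ≤ k → ∃ w ∈ X, w = v ∨ G.Adj w v := by
  classical
  induction k with
  | zero =>
    refine ⟨{r}, by simp, fun v hv => ⟨r, mem_singleton_self r, Or.inl ?_⟩⟩
    exact hconn.dist_eq_zero_iff.mp (Nat.le_zero.mp hv)
  | succ k ih =>
    obtain ⟨X, hXcard, hX⟩ := ih
    choose D hDcard hD using exists_dominating_ball_two hK hS hT
    refine ⟨X.biUnion D, ?_, fun v hv => ?_⟩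
    · calc (X.biUnion D).card ≤ ∑ x ∈ X, (D x).card := card_biUnion_le
        _ ≤ X.card * (2 * 4 ^ n + 1) ^ (n + 1) :=
          (sum_le_card_nsmul _ _ _ fun x _ => hDcard x).trans_eq (smul_eq_mul _ _)
        _ ≤ ((2 * 4 ^ n + 1) ^ (n + 1)) ^ (k + 1) := by
          rw [pow_succ]
          exact Nat.mul_le_mul_right _ hXcard
    · obtain ⟨u, hu, huv⟩ := hconn.exists_dist_le_of_dist_le_succ r hv
      obtain ⟨x, hx, hxu⟩ := hX u hu
      obtain ⟨w, hw, hwv⟩ := hD x v u hxu huv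
      exact ⟨w, mem_biUnion.mpr ⟨x, hx, hw⟩, hwv⟩

end GlobalPartition

theorem insp_le_of_not_hasInducedCopy {V : Type*} [Fintype V] {G : SimpleGraph V} {n : ℕ}
    (hconn : G.Connected) (hK : ¬ HasInducedCopy G (completeGraph (Fin n)))
    (hS : ¬ HasInducedCopy G (SStar n)) (hT : ¬ HasInducedCopy G (STilde n))
    (hP : ¬ HasInducedCopy G (pathGraph n)) : insp G ≤ (2 * 4 ^ n + 1) ^ (n * (n + 2)) := by
  classical
  have hK' := cliqueFree_of_not_hasInducedCopy hK
  obtain ⟨r⟩ := hconn.nonempty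
  obtain ⟨X, hXcard, hX⟩ := exists_dominating_ball hK' hS hT hconn r n
  choose! δ hδX hδ using fun v =>
    hX v (by have := hconn.dist_add_one_lt_of_not_hasInducedCopy hP r v; omega)
  let β : V → V := fun v => if v ∈ X then v else δ v
  have hβ : ∀ v, β v ∈ X := fun v => by
    by_cases hv : v ∈ X <;> simp [β, hv, hδX]
  have hpart := hasStarPartition_of_fibers (G := G) (k := (2 * 4 ^ n + 1) ^ n) β X
    (fun v _ => hβ v) fun x hx => hasStarPartition_of_forall_adj_clique hK' hS hT n {x} _ x
      (mem_singleton_self x) (mem_filter.mpr ⟨mem_univ x, by simp [β, hx]⟩) (by simp)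
      (by rw [card_singleton]; omega) fun v hv hvx k hk => by
        rw [mem_singleton.mp hk]
        have hvX : v ∉ X := fun h => hvx (by simpa [β, h] using (mem_filter.mp hv).2)
        have hδv : δ v = x := by simpa [β, hvX] using (mem_filter.mp hv).2
        have hadj := (hδ v).resolve_left (by rw [hδv]; exact Ne.symm hvx)
        rwa [hδv] at hadj
  refine insp_le_of_hasStarPartition (hpart.mono ?_)
  calc X.card * (2 * 4 ^ n + 1) ^ n ≤ ((2 * 4 ^ n + 1) ^ (n + 1)) ^ n * (2 * 4 ^ n + 1) ^ n :=
        Nat.mul_le_mul_right _ hXcard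
    _ = (2 * 4 ^ n + 1) ^ (n * (n + 2)) := by
        rw [← pow_mul, ← pow_add]
        ring_nf

theorem statement_12_general (N : ℕ) (k : Fin N → ℕ) (ℋ : ∀ i : Fin N, SimpleGraph (Fin (k i))) :
    (∃ c : ℕ, ∀ (V : Type) [Fintype V] (G : SimpleGraph V),
        G.Connected → (∀ i, ¬ HasInducedCopy G (ℋ i)) → insp G ≤ c) ↔
      ∃ n : ℕ, 4 ≤ n ∧
        (∃ i, HasInducedCopy (completeGraph (Fin n)) (ℋ i)) ∧
        (∃ i, HasInducedCopy (SStar n) (ℋ i)) ∧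
        (∃ i, HasInducedCopy (STilde n) (ℋ i)) ∧
        (∃ i, HasInducedCopy (pathGraph n) (ℋ i)) := by
  constructor
  · rintro ⟨c, hc⟩
    have hcopy : ∀ {W : Type} [Fintype W] (H : SimpleGraph W), H.Connected → c < insp H →
        ∃ i, HasInducedCopy H (ℋ i) := fun H hH hlt => by
      by_contra! hfree
      exact hlt.not_ge (hc _ H hH hfree)
    refine ⟨3 * c + 4, by omega, hcopy _ connected_top ?_, hcopy _ (sStar_connected _) ?_,
      hcopy _ (sTilde_connected _) ?_, hcopy _ (pathGraph_connected _) ?_⟩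
    · have := le_two_mul_insp_completeGraph (3 * c + 4)
      omega
    · have := le_insp_sStar (3 * c + 4)
      omega
    · have := lt_insp_sTilde (3 * c + 4)
      omega
    · have := le_three_mul_insp_pathGraph (3 * c + 4)
      omega
  · rintro ⟨n, -, ⟨i₁, h₁⟩, ⟨i₂, h₂⟩, ⟨i₃, h₃⟩, ⟨i₄, h₄⟩⟩
    exact ⟨_, fun V _ G hG hfree => insp_le_of_not_hasInducedCopy hG
      (fun h => hfree i₁ (h.trans h₁)) (fun h => hfree i₂ (h.trans h₂))
      (fun h => hfree i₃ (h.trans h₃)) (fun h => hfree i₄ (h.trans h₄))⟩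

theorem statement_12 (N : ℕ) (k : Fin N → ℕ) (ℋ : ∀ i : Fin N, SimpleGraph (Fin (k i)))
    (hconn : ∀ i, (ℋ i).Connected) :
    (∃ c : ℕ, ∀ (V : Type) [Fintype V] (G : SimpleGraph V),
        G.Connected → (∀ i, ¬ HasInducedCopy G (ℋ i)) → insp G ≤ c) ↔
      ∃ n : ℕ, 4 ≤ n ∧
        (∃ i, HasInducedCopy (completeGraph (Fin n)) (ℋ i)) ∧
        (∃ i, HasInducedCopy (SStar n) (ℋ i)) ∧
        (∃ i, HasInducedCopy (STilde n) (ℋ i)) ∧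
        (∃ i, HasInducedCopy (pathGraph n) (ℋ i)) :=
  statement_12_general N k ℋ
end

section
/- For all integers m ≥ 2 and n ≥ 3: inspc(H^(1)_{m,n}) ≥ ⌈(m+1)/2⌉, inspc(H^(2)_{m,n}) ≥ ⌈(m+1)/2⌉, and inspc(H^(3)_{m,n}) ≥ m. -/
open SimpleGraph

/-- `H⁽¹⁾_{m,n}` : `m` disjoint paths `u i 1 ⋯ u i n` (`u i j = inl (i,j)`), plus vertices
`v i = inr (inl i)`, `w i = inr (inr i)` and edges `vᵢwᵢ`, `vᵢ uᵢⁿ`, `vᵢ uᵢ₊₁¹`. -/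
def H1 (m n : ℕ) : SimpleGraph ((Fin m × Fin n) ⊕ (Fin (m - 1) ⊕ Fin (m - 1))) :=
  SimpleGraph.fromRel (fun a b =>
    (∃ (i : Fin m) (j j' : Fin n), (j : ℕ) + 1 = (j' : ℕ) ∧
      a = Sum.inl (i, j) ∧ b = Sum.inl (i, j')) ∨
    (∃ i : Fin (m - 1), a = Sum.inr (Sum.inl i) ∧ b = Sum.inr (Sum.inr i)) ∨
    (∃ (i : Fin (m - 1)) (p : Fin m) (q : Fin n), (p : ℕ) = (i : ℕ) ∧ (q : ℕ) = n - 1 ∧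
      a = Sum.inr (Sum.inl i) ∧ b = Sum.inl (p, q)) ∨
    (∃ (i : Fin (m - 1)) (p : Fin m) (q : Fin n), (p : ℕ) = (i : ℕ) + 1 ∧ (q : ℕ) = 0 ∧
      a = Sum.inr (Sum.inl i) ∧ b = Sum.inl (p, q)))

/-- `H⁽²⁾_{m,n}` : `m` disjoint paths plus vertices `vᵢ = inr i` and edges
`vᵢ uᵢⁿ`, `vᵢ uᵢ₊₁¹`, `uᵢⁿ uᵢ₊₁¹`. -/
def H2 (m n : ℕ) : SimpleGraph ((Fin m × Fin n) ⊕ Fin (m - 1)) :=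
  SimpleGraph.fromRel (fun a b =>
    (∃ (i : Fin m) (j j' : Fin n), (j : ℕ) + 1 = (j' : ℕ) ∧
      a = Sum.inl (i, j) ∧ b = Sum.inl (i, j')) ∨
    (∃ (i : Fin (m - 1)) (p : Fin m) (q : Fin n), (p : ℕ) = (i : ℕ) ∧ (q : ℕ) = n - 1 ∧
      a = Sum.inr i ∧ b = Sum.inl (p, q)) ∨
    (∃ (i : Fin (m - 1)) (p : Fin m) (q : Fin n), (p : ℕ) = (i : ℕ) + 1 ∧ (q : ℕ) = 0 ∧
      a = Sum.inr i ∧ b = Sum.inl (p, q)) ∨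
    (∃ (p p' : Fin m) (q q' : Fin n), (p : ℕ) + 1 = (p' : ℕ) ∧ (q : ℕ) = n - 1 ∧ (q' : ℕ) = 0 ∧
      a = Sum.inl (p, q) ∧ b = Sum.inl (p', q')))

/-- `H⁽³⁾_{m,n}` : `m` disjoint paths plus vertices `v i t = inr (i, t)` (`t : Fin m`)
and edges `v i t uᵢⁿ`, `v i t uᵢ₊₁¹`. -/
def H3 (m n : ℕ) : SimpleGraph ((Fin m × Fin n) ⊕ (Fin (m - 1) × Fin m)) :=
  SimpleGraph.fromRel (fun a b =>
    (∃ (i : Fin m) (j j' : Fin n), (j : ℕ) + 1 = (j' : ℕ) ∧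
      a = Sum.inl (i, j) ∧ b = Sum.inl (i, j')) ∨
    (∃ (i : Fin (m - 1)) (t : Fin m) (p : Fin m) (q : Fin n),
      (p : ℕ) = (i : ℕ) ∧ (q : ℕ) = n - 1 ∧ a = Sum.inr (i, t) ∧ b = Sum.inl (p, q)) ∨
    (∃ (i : Fin (m - 1)) (t : Fin m) (p : Fin m) (q : Fin n),
      (p : ℕ) = (i : ℕ) + 1 ∧ (q : ℕ) = 0 ∧ a = Sum.inr (i, t) ∧ b = Sum.inl (p, q)))

/-- `H⁽⁴⁾_{m,n}` : `m` disjoint paths plus vertices `v i t = inr (i, t)` (`t : Fin 2`)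
and edges `v i t uᵢⁿ`, `v i t uᵢ₊₁¹`. -/
def H4 (m n : ℕ) : SimpleGraph ((Fin m × Fin n) ⊕ (Fin (m - 1) × Fin 2)) :=
  SimpleGraph.fromRel (fun a b =>
    (∃ (i : Fin m) (j j' : Fin n), (j : ℕ) + 1 = (j' : ℕ) ∧
      a = Sum.inl (i, j) ∧ b = Sum.inl (i, j')) ∨
    (∃ (i : Fin (m - 1)) (t : Fin 2) (p : Fin m) (q : Fin n),
      (p : ℕ) = (i : ℕ) ∧ (q : ℕ) = n - 1 ∧ a = Sum.inr (i, t) ∧ b = Sum.inl (p, q)) ∨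
    (∃ (i : Fin (m - 1)) (t : Fin 2) (p : Fin m) (q : Fin n),
      (p : ℕ) = (i : ℕ) + 1 ∧ (q : ℕ) = 0 ∧ a = Sum.inr (i, t) ∧ b = Sum.inl (p, q)))

/-- `H⁽⁵⁾_{m,n}` : `H⁽⁴⁾_{m,n}` plus the edges `v i 1 ~ v i 2`. -/
def H5 (m n : ℕ) : SimpleGraph ((Fin m × Fin n) ⊕ (Fin (m - 1) × Fin 2)) :=
  SimpleGraph.fromRel (fun a b =>
    (∃ (i : Fin m) (j j' : Fin n), (j : ℕ) + 1 = (j' : ℕ) ∧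
      a = Sum.inl (i, j) ∧ b = Sum.inl (i, j')) ∨
    (∃ (i : Fin (m - 1)) (t : Fin 2) (p : Fin m) (q : Fin n),
      (p : ℕ) = (i : ℕ) ∧ (q : ℕ) = n - 1 ∧ a = Sum.inr (i, t) ∧ b = Sum.inl (p, q)) ∨
    (∃ (i : Fin (m - 1)) (t : Fin 2) (p : Fin m) (q : Fin n),
      (p : ℕ) = (i : ℕ) + 1 ∧ (q : ℕ) = 0 ∧ a = Sum.inr (i, t) ∧ b = Sum.inl (p, q)) ∨
    (∃ i : Fin (m - 1), a = Sum.inr (i, 0) ∧ b = Sum.inr (i, 1)))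

/-! A vertex whose neighbourhood is a clique can only be an end of an induced path, and
two vertices of an induced star other than its centre share the centre as a neighbour. Hence
an induced star or path contains at most two vertices of a family of such vertices with
pairwise disjoint neighbourhoods. In `H⁽¹⁾` the vertices `wᵢ`, `u₁¹`, `uₘⁿ`, and in `H⁽²⁾`
the vertices `vᵢ`, `u₁¹`, `uₘⁿ`, form such a family of `m + 1` vertices.

In `H⁽³⁾` the `m` vertices `v_{i,1}, …, v_{i,m}` are twins. If fewer than `m` sets cover,
two of them lie in one set, and an induced star or path containing two twins is dominated by
one of their common neighbours `uᵢⁿ`, `uᵢ₊₁¹`. The `m - 1` sets obtained this way are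
distinct and none of them contains `u₁¹`. -/

open Function

namespace SimpleGraph

variable {V W : Type*} {G : SimpleGraph V} {H : SimpleGraph W} {S : Set V} {r : ℕ}

lemma pathGraph_eq_zero_or_eq_last_of_isClique_neighborSet {x : Fin r}
    (h : (pathGraph r).IsClique ((pathGraph r).neighborSet x)) :
    x.val = 0 ∨ x.val + 1 = r := by
  by_contra! hx
  have hadj := @h ⟨x - 1, by omega⟩ (by simp [pathGraph_adj]; omega) ⟨x + 1, by omega⟩
    (by simp [pathGraph_adj]) (by simp [Fin.ext_iff])
  simp [pathGraph_adj] at hadj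
  omega

lemma pathGraph_exists_dominating_of_neighborSet_eq {x y : Fin r} (hxy : x ≠ y)
    (h : (pathGraph r).neighborSet x = (pathGraph r).neighborSet y) :
    ∃ c ∈ (pathGraph r).neighborSet x, ∀ z, z = c ∨ (pathGraph r).Adj c z := by
  have hN (z : Fin r) : (pathGraph r).Adj x z ↔ (pathGraph r).Adj y z := Set.ext_iff.1 h z
  have hxy' : x.val ≠ y.val := Fin.val_ne_of_ne hxy
  obtain ⟨c, hxc⟩ : ∃ c, (pathGraph r).Adj x c := by
    by_cases hx : x.val + 1 < r
    · exact ⟨⟨x + 1, hx⟩, by simp [pathGraph_adj]⟩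
    · exact ⟨⟨x - 1, by omega⟩, by simp [pathGraph_adj]; omega⟩
  have hyc := (hN c).1 hxc
  refine ⟨c, hxc, fun z => ?_⟩
  rw [pathGraph_adj] at hxc hyc ⊢
  by_contra! hz
  have hzc' : z.val ≠ c.val := Fin.val_ne_of_ne hz.1
  -- a vertex two steps from `c` towards `z` is adjacent to exactly one of the twins
  by_cases hzc : z.val < c.val
  · have hw := hN ⟨c - 2, by omega⟩
    simp only [pathGraph_adj] at hw
    omega
  · have hw := hN ⟨c + 2, by omega⟩
    simp only [pathGraph_adj] at hw
    omega

lemma Iso.exists_embedding_range_eq (e : G.induce S ≃g H) :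
    ∃ f : H ↪g G, Set.range f = S := by
  refine ⟨(Embedding.induce S).comp e.symm.toEmbedding, ?_⟩
  ext v
  simp

lemma Embedding.isClique_neighborSet (f : H ↪g G) {x : W}
    (h : G.IsClique (G.neighborSet (f x))) : H.IsClique (H.neighborSet x) :=
  fun _ ha _ hb hab => f.map_adj_iff.1 <|
    h (f.map_adj_iff.2 ha) (f.map_adj_iff.2 hb) (f.injective.ne hab)

lemma Embedding.neighborSet_eq_preimage (f : H ↪g G) (x : W) :
    H.neighborSet x = f ⁻¹' G.neighborSet (f x) := by
  ext y
  simp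

end SimpleGraph

abbrev IsInducedSPSet {V : Type*} (G : SimpleGraph V) (S : Set V) : Prop :=
  IsInducedStarSet G S ∨ IsInducedPathSet G S

section SPSets

variable {V : Type*} {G : SimpleGraph V} {S : Set V}

lemma IsInducedStarSet.exists_center (hS : IsInducedStarSet G S) :
    ∃ c ∈ S, ∀ y ∈ S, y ≠ c → G.Adj c y := by
  obtain ⟨k, -, ⟨e⟩⟩ := hS
  obtain ⟨f, rfl⟩ := e.exists_embedding_range_eq
  refine ⟨f (Sum.inl ()), Set.mem_range_self _, ?_⟩
  rintro _ ⟨(⟨⟩ | j), rfl⟩ hne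
  · exact absurd rfl hne
  · exact f.map_adj_iff.2 (by simp [_root_.starGraph])

lemma IsInducedPathSet.exists_embedding (hS : IsInducedPathSet G S) :
    ∃ r, ∃ f : pathGraph r ↪g G, Set.range f = S := by
  obtain ⟨r, -, ⟨e⟩⟩ := hS
  exact ⟨r, e.exists_embedding_range_eq⟩

lemma IsInducedStarSet.card_le_two {t : Finset V} (hS : IsInducedStarSet G S) (ht : ↑t ⊆ S)
    (hdisj : (t : Set V).Pairwise (Disjoint on G.neighborSet)) : t.card ≤ 2 := by
  obtain ⟨c, -, hc⟩ := hS.exists_center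
  have hcentre : ∀ x ∈ t, ∀ y ∈ t, x ≠ y → x = c ∨ y = c := by
    intro x hx y hy hxy
    by_contra! hne
    exact Set.disjoint_left.1 (hdisj hx hy hxy) (hc x (ht hx) hne.1).symm
      (hc y (ht hy) hne.2).symm
  by_contra! h
  obtain ⟨a, ha, b, hb, d, hd, hab, had, hbd⟩ := Finset.two_lt_card.1 h
  have := hcentre a ha b hb hab
  have := hcentre a ha d hd had
  have := hcentre b hb d hd hbd
  grind

lemma IsInducedPathSet.card_le_two {t : Finset V} (hS : IsInducedPathSet G S) (ht : ↑t ⊆ S)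
    (hcl : ∀ a ∈ t, G.IsClique (G.neighborSet a)) : t.card ≤ 2 := by
  obtain ⟨r, f, rfl⟩ := hS.exists_embedding
  have hend : ∀ a ∈ t, ∃ x : Fin r, f x = a ∧ (x.val = 0 ∨ x.val + 1 = r) := by
    intro a ha
    obtain ⟨x, rfl⟩ := ht ha
    exact ⟨x, rfl, pathGraph_eq_zero_or_eq_last_of_isClique_neighborSet
      (f.isClique_neighborSet (hcl _ ha))⟩
  by_contra! h
  obtain ⟨a, ha, b, hb, d, hd, hab, had, hbd⟩ := Finset.two_lt_card.1 h
  obtain ⟨x, rfl, hx⟩ := hend a ha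
  obtain ⟨y, rfl, hy⟩ := hend b hb
  obtain ⟨z, rfl, hz⟩ := hend d hd
  have := Fin.val_ne_of_ne (ne_of_apply_ne f hab)
  have := Fin.val_ne_of_ne (ne_of_apply_ne f had)
  have := Fin.val_ne_of_ne (ne_of_apply_ne f hbd)
  omega

lemma IsInducedSPSet.exists_dominating_of_neighborSet_eq (hS : IsInducedSPSet G S) {x y : V}
    (hx : x ∈ S) (hy : y ∈ S) (hxy : x ≠ y) (h : G.neighborSet x = G.neighborSet y) :
    ∃ u ∈ G.neighborSet x, ∀ z ∈ S, z = u ∨ G.Adj u z := by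
  rcases hS with hS | hS
  · obtain ⟨c, -, hc⟩ := hS.exists_center
    have hxc : x ≠ c := by
      rintro rfl
      have hyy : y ∈ G.neighborSet y := h ▸ hc y hy hxy.symm
      exact G.irrefl hyy
    exact ⟨c, (hc x hx hxc).symm, fun z hz => or_iff_not_imp_left.2 (hc z hz)⟩
  · obtain ⟨r, f, rfl⟩ := hS.exists_embedding
    obtain ⟨a, rfl⟩ := hx
    obtain ⟨b, rfl⟩ := hy
    obtain ⟨c, hac, hc⟩ := pathGraph_exists_dominating_of_neighborSet_eq
      (ne_of_apply_ne f hxy) (by rw [f.neighborSet_eq_preimage, f.neighborSet_eq_preimage, h])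
    refine ⟨f c, f.map_adj_iff.2 hac, ?_⟩
    rintro _ ⟨z, rfl⟩
    rcases hc z with rfl | hcz
    · exact Or.inl rfl
    · exact Or.inr (f.map_adj_iff.2 hcz)

lemma isInducedPathSet_singleton (v : V) : IsInducedPathSet G {v} :=
  ⟨1, le_rfl, ⟨{ toEquiv := Equiv.ofUnique _ _, map_rel_iff' := by simp }⟩⟩

lemma le_inspc [Finite V] {k : ℕ}
    (h : ∀ P : Finset (Set V), IsCoverBy P (IsInducedSPSet G) → k ≤ P.card) : k ≤ inspc G := by
  classical
  cases nonempty_fintype V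
  refine le_csInf ⟨_, Finset.univ.image ({·}), rfl, ?_, ?_⟩ ?_
  · simp only [Finset.mem_image]
    rintro _ ⟨v, -, rfl⟩
    exact Or.inr (isInducedPathSet_singleton v)
  · exact fun v => ⟨{v}, Finset.mem_image_of_mem _ (Finset.mem_univ v), rfl⟩
  · rintro _ ⟨P, rfl, hP⟩
    exact h P hP

lemma IsCoverBy.card_le_card_mul {pred : Set V → Prop} {P : Finset (Set V)}
    (hP : IsCoverBy P pred) {t : Finset V} {k : ℕ}
    (hk : ∀ S, pred S → ∀ s ⊆ t, ↑s ⊆ S → s.card ≤ k) : t.card ≤ P.card * k := by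
  classical
  have hsub : t ⊆ P.biUnion fun S => t.filter (· ∈ S) := by
    intro v hv
    obtain ⟨S, hS, hvS⟩ := hP.2 v
    exact Finset.mem_biUnion.2 ⟨S, hS, Finset.mem_filter.2 ⟨hv, hvS⟩⟩
  refine (Finset.card_le_card hsub).trans (Finset.card_biUnion_le_card_mul _ _ _ ?_)
  intro S hS
  exact hk S (hP.1 S hS) _ (Finset.filter_subset _ _) fun v hv => (Finset.mem_filter.1 hv).2

theorem le_inspc_of_isClique_neighborSet [Finite V] {ι : Type*} [Fintype ι] (τ : ι → V)
    (hne : ∀ i, (G.neighborSet (τ i)).Nonempty) (hcl : ∀ i, G.IsClique (G.neighborSet (τ i)))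
    (hdisj : Pairwise (Disjoint on fun i => G.neighborSet (τ i))) :
    (Fintype.card ι + 1) / 2 ≤ inspc G := by
  classical
  have hτ : Injective τ := by
    intro i j hij
    by_contra hij'
    have hempty := hdisj hij'
    simp only [onFun, hij, disjoint_self, Set.bot_eq_empty] at hempty
    exact (hne j).ne_empty hempty
  let t := Finset.univ.map ⟨τ, hτ⟩
  have hcard : t.card = Fintype.card ι := by simp [t]
  have htcl : ∀ a ∈ t, G.IsClique (G.neighborSet a) := by simp [t, hcl]
  have htdisj : (t : Set V).Pairwise (Disjoint on G.neighborSet) := by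
    simpa [t] using Pairwise.range_pairwise (r := Disjoint on G.neighborSet) hdisj
  refine le_inspc fun P hP => ?_
  have hcount := hP.card_le_card_mul (t := t) (k := 2) fun S hS s hst hsS => by
    rcases hS with hS | hS
    · exact hS.card_le_two hsS (htdisj.mono (by simpa using hst))
    · exact hS.card_le_two hsS fun a ha => htcl a (hst ha)
  omega

lemma IsCoverBy.exists_dominating_of_twins {P : Finset (Set V)}
    (hP : IsCoverBy P (IsInducedSPSet G)) {ι : Type*} [Fintype ι] {x : ι → V}
    (hx : Injective x) (htwin : ∀ i j, G.neighborSet (x i) = G.neighborSet (x j))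
    (hcard : P.card < Fintype.card ι) :
    ∃ S ∈ P, ∃ i, x i ∈ S ∧ ∃ u ∈ G.neighborSet (x i), ∀ z ∈ S, z = u ∨ G.Adj u z := by
  choose S hSP hxS using fun i => hP.2 (x i)
  obtain ⟨i, -, j, -, hij, hS⟩ := Finset.exists_ne_map_eq_of_card_lt_of_maps_to
    (by rwa [Finset.card_univ]) fun i _ => hSP i
  exact ⟨S i, hSP i, i, hxS i, (hP.1 _ (hSP i)).exists_dominating_of_neighborSet_eq (hxS i)
    (hS ▸ hxS j) (hx.ne hij) (htwin i j)⟩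

end SPSets

section H1

variable {m n : ℕ}

lemma H1_neighborSet_w (k : Fin (m - 1)) :
    (H1 m n).neighborSet (.inr (.inr k)) = {.inr (.inl k)} := by
  ext ((⟨i, j⟩ | l | l)) <;> simp [H1, eq_comm]

lemma H1_neighborSet_first (hm : 1 ≤ m) (hn : 2 ≤ n) :
    (H1 m n).neighborSet (.inl (⟨0, by omega⟩, ⟨0, by omega⟩)) =
      {.inl (⟨0, by omega⟩, ⟨1, by omega⟩)} := by
  ext ((⟨i, j⟩ | l | l)) <;> simp [H1, Prod.ext_iff] <;> grind

lemma H1_neighborSet_last (hm : 1 ≤ m) (hn : 2 ≤ n) :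
    (H1 m n).neighborSet (.inl (⟨m - 1, by omega⟩, ⟨n - 1, by omega⟩)) =
      {.inl (⟨m - 1, by omega⟩, ⟨n - 2, by omega⟩)} := by
  ext ((⟨i, j⟩ | l | l)) <;> simp [H1, Prod.ext_iff] <;> grind

lemma le_inspc_H1 (hm : 2 ≤ m) (hn : 2 ≤ n) : (m + 2) / 2 ≤ inspc (H1 m n) := by
  let τ : Fin (m - 1) ⊕ Fin 2 → (Fin m × Fin n) ⊕ (Fin (m - 1) ⊕ Fin (m - 1)) :=
    Sum.elim (fun k => .inr (.inr k))
      ![.inl (⟨0, by omega⟩, ⟨0, by omega⟩), .inl (⟨m - 1, by omega⟩, ⟨n - 1, by omega⟩)]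
  let ν : Fin (m - 1) ⊕ Fin 2 → (Fin m × Fin n) ⊕ (Fin (m - 1) ⊕ Fin (m - 1)) :=
    Sum.elim (fun k => .inr (.inl k))
      ![.inl (⟨0, by omega⟩, ⟨1, by omega⟩), .inl (⟨m - 1, by omega⟩, ⟨n - 2, by omega⟩)]
  have hN : ∀ i, (H1 m n).neighborSet (τ i) = {ν i} := by
    rintro (k | j)
    · exact H1_neighborSet_w k
    · fin_cases j
      exacts [H1_neighborSet_first (by omega) hn, H1_neighborSet_last (by omega) hn]
  have hν : Pairwise fun i j => ν i ≠ ν j := by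
    rintro (k | j) (l | j') hij <;> try fin_cases j
    all_goals (try fin_cases j') <;> simp_all [ν, Prod.ext_iff] <;> omega
  have := le_inspc_of_isClique_neighborSet (G := H1 m n) τ (by simp [hN]) (by simp [hN])
    fun i j hij => by simpa [onFun, hN] using hν hij
  simpa [show m - 1 + 2 + 1 = m + 2 by omega] using this

end H1

section H2

variable {m n : ℕ}

lemma H2_neighborSet_v (hn : 1 ≤ n) (k : Fin (m - 1)) :
    (H2 m n).neighborSet (.inr k) =
      {.inl (⟨k, by omega⟩, ⟨n - 1, by omega⟩),
        .inl (⟨k + 1, by omega⟩, ⟨0, by omega⟩)} := by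
  ext ((⟨i, j⟩ | l)) <;> simp [H2, Prod.ext_iff]
  grind

lemma H2_adj_last_first (hn : 1 ≤ n) (k : Fin (m - 1)) :
    (H2 m n).Adj (.inl (⟨k, by omega⟩, ⟨n - 1, by omega⟩))
      (.inl (⟨k + 1, by omega⟩, ⟨0, by omega⟩)) := by
  simp [H2, Prod.ext_iff]

lemma H2_neighborSet_first (hm : 1 ≤ m) (hn : 2 ≤ n) :
    (H2 m n).neighborSet (.inl (⟨0, by omega⟩, ⟨0, by omega⟩)) =
      {.inl (⟨0, by omega⟩, ⟨1, by omega⟩)} := by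
  ext ((⟨i, j⟩ | l)) <;> simp [H2, Prod.ext_iff] <;> grind

lemma H2_neighborSet_last (hm : 1 ≤ m) (hn : 2 ≤ n) :
    (H2 m n).neighborSet (.inl (⟨m - 1, by omega⟩, ⟨n - 1, by omega⟩)) =
      {.inl (⟨m - 1, by omega⟩, ⟨n - 2, by omega⟩)} := by
  ext ((⟨i, j⟩ | l)) <;> simp [H2, Prod.ext_iff] <;> grind

lemma le_inspc_H2 (hm : 2 ≤ m) (hn : 3 ≤ n) : (m + 2) / 2 ≤ inspc (H2 m n) := by
  let τ : Fin (m - 1) ⊕ Fin 2 → (Fin m × Fin n) ⊕ Fin (m - 1) :=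
    Sum.elim .inr
      ![.inl (⟨0, by omega⟩, ⟨0, by omega⟩), .inl (⟨m - 1, by omega⟩, ⟨n - 1, by omega⟩)]
  let ν : Fin (m - 1) ⊕ Fin 2 → Set ((Fin m × Fin n) ⊕ Fin (m - 1)) :=
    Sum.elim
      (fun k => {.inl (⟨k, by omega⟩, ⟨n - 1, by omega⟩),
        .inl (⟨k + 1, by omega⟩, ⟨0, by omega⟩)})
      ![{.inl (⟨0, by omega⟩, ⟨1, by omega⟩)}, {.inl (⟨m - 1, by omega⟩, ⟨n - 2, by omega⟩)}]
  have hN : ∀ i, (H2 m n).neighborSet (τ i) = ν i := by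
    rintro (k | j)
    · exact H2_neighborSet_v (by omega) k
    · fin_cases j
      exacts [H2_neighborSet_first (by omega) (by omega),
        H2_neighborSet_last (by omega) (by omega)]
  have hne : ∀ i, (ν i).Nonempty := by
    rintro (k | j)
    · exact Set.insert_nonempty _ _
    · fin_cases j <;> exact Set.singleton_nonempty _
  have hcl : ∀ i, (H2 m n).IsClique (ν i) := by
    rintro (k | j)
    · exact isClique_pair.2 fun _ => H2_adj_last_first (by omega) k
    · fin_cases j <;> exact isClique_singleton _
  have hdisj : Pairwise (Disjoint on ν) := by
    rintro (k | j) (l | j') hij <;> try fin_cases j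
    all_goals (try fin_cases j') <;> simp_all [ν, onFun, Prod.ext_iff] <;> omega
  have := le_inspc_of_isClique_neighborSet (G := H2 m n) τ (by simpa [hN] using hne)
    (by simpa [hN] using hcl) (by simpa [hN] using hdisj)
  simpa [show m - 1 + 2 + 1 = m + 2 by omega] using this

end H2

section H3

variable {m n : ℕ}

lemma H3_neighborSet_v (hn : 1 ≤ n) (k : Fin (m - 1)) (t : Fin m) :
    (H3 m n).neighborSet (.inr (k, t)) =
      {.inl (⟨k, by omega⟩, ⟨n - 1, by omega⟩),
        .inl (⟨k + 1, by omega⟩, ⟨0, by omega⟩)} := by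
  ext ((⟨i, j⟩ | ⟨l, s⟩)) <;> simp [H3, Prod.ext_iff]; grind

lemma H3_neighborSet_first (hm : 1 ≤ m) (hn : 2 ≤ n) :
    (H3 m n).neighborSet (.inl (⟨0, by omega⟩, ⟨0, by omega⟩)) =
      {.inl (⟨0, by omega⟩, ⟨1, by omega⟩)} := by
  ext ((⟨i, j⟩ | ⟨l, s⟩)) <;> simp [H3, Prod.ext_iff] <;> grind

lemma le_inspc_H3 (hm : 2 ≤ m) (hn : 3 ≤ n) : m ≤ inspc (H3 m n) := by
  refine le_inspc fun P hP => ?_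
  by_contra! hlt
  have hblock (k : Fin (m - 1)) : ∃ S ∈ P, ∃ t, Sum.inr (k, t) ∈ S ∧
      ∃ u ∈ (H3 m n).neighborSet (.inr (k, t)), ∀ z ∈ S, z = u ∨ (H3 m n).Adj u z :=
    hP.exists_dominating_of_twins (x := fun t => .inr (k, t)) (fun _ _ h => by simpa using h)
      (fun t t' => by rw [H3_neighborSet_v (by omega), H3_neighborSet_v (by omega)])
      (by simpa using hlt)
  choose S hSP t htS u hu hdom using hblock
  simp only [H3_neighborSet_v (show 1 ≤ n by omega), Set.mem_insert_iff,
    Set.mem_singleton_iff] at hu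
  obtain ⟨S₀, hS₀P, h₀⟩ := hP.2 (.inl (⟨0, by omega⟩, ⟨0, by omega⟩))
  have hS₀ (k : Fin (m - 1)) : S₀ ≠ S k := by
    intro h
    have hadj := hdom k _ (h ▸ h₀)
    rw [adj_comm, ← mem_neighborSet,
      H3_neighborSet_first (by omega) (by omega)] at hadj
    rcases hu k with huk | huk <;> simp [huk, Prod.ext_iff] at hadj
    omega
  have hS (k l : Fin (m - 1)) (h : S k = S l) : k = l := by
    have hadj := hdom k _ (h ▸ htS l)
    rw [adj_comm, ← mem_neighborSet, H3_neighborSet_v (by omega)] at hadj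
    rcases hu k with huk | huk <;> simp [huk, Prod.ext_iff] at hadj <;> omega
  let f : Option (Fin (m - 1)) → P := fun o => o.elim ⟨S₀, hS₀P⟩ fun k => ⟨S k, hSP k⟩
  have hf : Injective f := by
    rintro (_ | k) (_ | l) h <;> simp only [f, Option.elim, Subtype.mk.injEq] at h
    · rfl
    · exact absurd h (hS₀ l)
    · exact absurd h.symm (hS₀ k)
    · rw [hS k l h]
  have := Fintype.card_le_of_injective f hf
  simp at this
  omega

end H3

theorem statement_18 (m n : ℕ) (hm : 2 ≤ m) (hn : 3 ≤ n) :
    (m + 2) / 2 ≤ inspc (H1 m n) ∧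
    (m + 2) / 2 ≤ inspc (H2 m n) ∧
    m ≤ inspc (H3 m n) :=
  ⟨le_inspc_H1 hm (by omega), le_inspc_H2 hm hn, le_inspc_H3 hm hn⟩
end
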